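/- arXiv:math/0210363 — 7 statements merged into one kernel-verified Lean document; each statement's English description precedes it below -/
import Mathlib

section
/- Let p be an odd prime, k of characteristic p, and let 0 ≤ a₁,a₂,a₃ < p-1 be integers with a₁+a₂+a₃ even and ≤ p-1. Set d = (p-1-a₁-a₂-a₃)/2. Then the hypergeometric differential equation x(x-1)u'' + [(2+a₁+a₂)x - (1+a₁)]u' + ((1+a₁+a₂)²-a₃²)/4 · u = 0 over k has a unique monic polynomial solution u ∈ k[x] of degree d. -/
open Polynomial

private lemma coeff_hyper (k : Type*) [Field k] (c₀ c₁ P₂ : k) (u : k[X]) (n : ℕ) :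
    (X * (X - 1) * derivative (derivative u)
      + (C c₁ * X - C c₀) * derivative u + C P₂ * u).coeff n
    = ((n:k)^2 + (c₁ - 1) * n + P₂) * u.coeff n
      - ((n:k)+1) * ((n:k) + c₀) * u.coeff (n+1) := by
  have hrw : X * (X - 1) * derivative (derivative u)
      + (C c₁ * X - C c₀) * derivative u + C P₂ * u
    = X * (X * derivative (derivative u)) - X * derivative (derivative u)
      + X * (C c₁ * derivative u) - C c₀ * derivative u + C P₂ * u := by ring
  rw [hrw]
  match n with
  | 0 => simp [coeff_derivative]; ring
  | 1 => simp [coeff_derivative, coeff_X_mul]; ring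
  | (m+2) => simp [coeff_derivative, coeff_X_mul]; ring


/-- The hypergeometric differential equation has a unique monic polynomial
solution of degree `d = (p-1-a₁-a₂-a₃)/2`. -/
theorem stmt2 (p : ℕ) (hp : p.Prime) (hodd : Odd p)
    (k : Type*) [Field k] [CharP k p]
    (a₁ a₂ a₃ d : ℕ)
    (h₁ : a₁ < p - 1) (h₂ : a₂ < p - 1) (h₃ : a₃ < p - 1)
    (heven : Even (a₁ + a₂ + a₃)) (hsum : a₁ + a₂ + a₃ ≤ p - 1)
    (hd : 2 * d = p - 1 - (a₁ + a₂ + a₃))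
    (P₂ : k) (hP₂ : 4 * P₂ = ((1 : k) + (a₁ : k) + (a₂ : k)) ^ 2 - (a₃ : k) ^ 2) :
    ∃! u : k[X], u.Monic ∧ u.natDegree = d ∧
      X * (X - 1) * derivative (derivative u)
        + (C ((2 : k) + (a₁ : k) + (a₂ : k)) * X - C ((1 : k) + (a₁ : k)))
            * derivative u
        + C P₂ * u = 0 := by
  have hp2 : 2 ≤ p := hp.two_le
  have hp3 : 3 ≤ p := by
    rcases hodd with ⟨t, ht⟩; omega
  have hpsum : 2 * d + 1 + (a₁ + a₂ + a₃) = p := by omega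
  -- basic nonvanishing
  have h4 : (4 : k) ≠ 0 := by
    have : ((4:ℕ) : k) ≠ 0 := by
      rw [Ne, CharP.cast_eq_zero_iff k p]
      intro hdvd
      have : p ∣ 2 := hp.dvd_of_dvd_pow (n := 2) (by norm_num [hdvd])
      have := Nat.le_of_dvd (by norm_num) this
      omega
    simpa using this
  set e : k := (1 : k) + a₁ + a₂ with he
  set A : ℕ → k := fun n => (n:k)^2 + e * n + P₂ with hA
  set B : ℕ → k := fun n => ((n:k) + 1) * ((n:k) + 1 + a₁) with hB
  -- factorization of 4 * A n
  have hfac : ∀ n : ℕ, 4 * A n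
      = ((2*n + 1 + a₁ + a₂ + a₃ : ℕ) : k) * (((2*n + 1 + a₁ + a₂ : ℕ) : k) - a₃) := by
    intro n
    push_cast
    simp only [hA, he]
    linear_combination hP₂
  have hAd : A d = 0 := by
    have h1 : ((2*d + 1 + a₁ + a₂ + a₃ : ℕ) : k) = 0 := by
      have : (2*d + 1 + a₁ + a₂ + a₃ : ℕ) = p := by omega
      rw [this, CharP.cast_eq_zero]
    have := hfac d
    rw [h1, zero_mul] at this
    rcases mul_eq_zero.mp this with h | h
    · exact absurd h h4
    · exact h
  have hAne : ∀ n : ℕ, n < d → A n ≠ 0 := by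
    intro n hn
    have hf1 : ((2*n + 1 + a₁ + a₂ + a₃ : ℕ) : k) ≠ 0 := by
      rw [Ne, CharP.cast_eq_zero_iff k p]
      intro hdvd
      have hlt : 2*n + 1 + a₁ + a₂ + a₃ < p := by omega
      have hpos : 0 < 2*n + 1 + a₁ + a₂ + a₃ := by omega
      have := Nat.le_of_dvd hpos hdvd
      omega
    have hf2 : (((2*n + 1 + a₁ + a₂ : ℕ) : k) - a₃) ≠ 0 := by
      intro hzero
      have hcast : (((((2*n + 1 + a₁ + a₂ : ℕ) : ℤ) - a₃ : ℤ)) : k) = 0 := by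
        push_cast
        push_cast at hzero
        linear_combination hzero
      rw [CharP.intCast_eq_zero_iff k p] at hcast
      have habs : |((2*n + 1 + a₁ + a₂ : ℕ) : ℤ) - a₃| < (p:ℤ) := by
        rw [abs_lt]; constructor <;> push_cast <;> omega
      have hz0 := Int.eq_zero_of_abs_lt_dvd hcast habs
      rcases heven with ⟨w, hw⟩
      omega
    intro hA0
    have := hfac n
    rw [hA0, mul_zero] at this
    rcases mul_eq_zero.mp this.symm with h | h
    · exact hf1 h
    · exact hf2 h
  -- solution ↔ recurrence
  have hcoeff : ∀ (u : k[X]) (n : ℕ),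
      (X * (X - 1) * derivative (derivative u)
        + (C ((2 : k) + (a₁ : k) + (a₂ : k)) * X - C ((1 : k) + (a₁ : k)))
            * derivative u + C P₂ * u).coeff n
      = A n * u.coeff n - B n * u.coeff (n+1) := by
    intro u n
    rw [coeff_hyper]
    simp only [hA, hB, he]
    ring
  have hsol : ∀ u : k[X],
      (X * (X - 1) * derivative (derivative u)
        + (C ((2 : k) + (a₁ : k) + (a₂ : k)) * X - C ((1 : k) + (a₁ : k)))
            * derivative u + C P₂ * u = 0)
      ↔ ∀ n, A n * u.coeff n = B n * u.coeff (n+1) := by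
    intro u
    constructor
    · intro h n
      have := congrArg (fun q => q.coeff n) h
      simp only [coeff_zero] at this
      rw [hcoeff u n] at this
      exact sub_eq_zero.mp this
    · intro h
      ext n
      rw [hcoeff u n, coeff_zero, h n, sub_self]
  -- the candidate
  set c : ℕ → k := fun n => ∏ j ∈ Finset.Ico n d, ((A j)⁻¹ * B j) with hc
  have hcd : c d = 1 := by simp [hc]
  have hcrec : ∀ n, n < d → A n * c n = B n * c (n+1) := by
    intro n hn
    have hsplit : c n = (A n)⁻¹ * B n * c (n+1) := by
      simp only [hc]
      rw [Finset.prod_eq_prod_Ico_succ_bot hn]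
    rw [hsplit, ← mul_assoc, ← mul_assoc, mul_inv_cancel₀ (hAne n hn), one_mul]
  set u : k[X] := ∑ n ∈ Finset.range (d+1), C (c n) * X ^ n with hu
  have hucoeff : ∀ n, u.coeff n = if n ≤ d then c n else 0 := by
    intro n
    rw [hu, finset_sum_coeff]
    simp only [coeff_C_mul, coeff_X_pow, mul_ite, mul_one, mul_zero]
    rw [Finset.sum_ite_eq (Finset.range (d+1)) n c]
    simp [Nat.lt_succ_iff]
  have hudeg : u.natDegree = d := by
    have hle : u.natDegree ≤ d := by
      apply natDegree_le_iff_coeff_eq_zero.mpr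
      intro m hm
      rw [hucoeff, if_neg (by omega : ¬ m ≤ d)]
    have hge : d ≤ u.natDegree := by
      apply le_natDegree_of_ne_zero
      rw [hucoeff]
      simp [hcd]
    omega
  have humonic : u.Monic := by
    rw [Monic, leadingCoeff, hudeg, hucoeff]
    simp [hcd]
  have husol : ∀ n, A n * u.coeff n = B n * u.coeff (n+1) := by
    intro n
    rcases lt_trichotomy n d with h | h | h
    · rw [hucoeff, hucoeff, if_pos (le_of_lt h), if_pos (by omega)]
      exact hcrec n h
    · subst h
      rw [hucoeff, hucoeff, if_pos le_rfl, if_neg (by omega), hAd, zero_mul, mul_zero]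
    · rw [hucoeff, hucoeff, if_neg (by omega), if_neg (by omega), mul_zero, mul_zero]
  refine ⟨u, ⟨humonic, hudeg, (hsol u).mpr husol⟩, ?_⟩
  rintro v ⟨hvmonic, hvdeg, hveq⟩
  have hvrec := (hsol v).mp hveq
  have hv1 : v.coeff d = 1 := by rw [← hvdeg]; exact hvmonic.coeff_natDegree
  have hu1 : u.coeff d = 1 := by rw [← hudeg]; exact humonic.coeff_natDegree
  have key : ∀ m, v.coeff (d - m) = u.coeff (d - m) := by
    intro m
    induction m with
    | zero => simp only [Nat.sub_zero, hv1, hu1]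
    | succ m ih =>
      by_cases hmd : d ≤ m
      · have : d - (m+1) = d - m := by omega
        rw [this]; exact ih
      · have hn : d - (m+1) < d := by omega
        have hstep : d - (m+1) + 1 = d - m := by omega
        set n := d - (m+1) with hndef
        have hnz := hAne n hn
        have heq : A n * v.coeff n = A n * u.coeff n := by
          rw [hvrec n, husol n, hstep, ih]
        exact mul_left_cancel₀ hnz heq
  ext n
  by_cases hn : n ≤ d
  · have := key (d - n)
    rwa [Nat.sub_sub_self hn] at this
  · rw [hucoeff, if_neg hn]
    apply coeff_eq_zero_of_natDegree_lt
    omega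
end

section
/- Let p be an odd prime, k an algebraically closed field of characteristic p, and u ∈ k[x] the unique monic degree-d polynomial solution of the hypergeometric equation x(x-1)u'' + [(2+a₁+a₂)x - (1+a₁)]u' + ((1+a₁+a₂)²-a₃²)/4 · u = 0, where 0 ≤ a₁,a₂,a₃ < p-1 are integers with a₁+a₂+a₃ even and ≤ p-1 and d = (p-1-a₁-a₂-a₃)/2. Then u(0) ≠ 0 and u(1) ≠ 0. -/
open Polynomial

/-- Key lemma: if `u : k[X]` satisfies a hypergeometric-type ODE whose
coefficient recursion `A_n u_{n+1} = B_n u_n` has `A_n = (n+1)(n+1+a)`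
nonzero mod `p` for `n < d`, and `u.coeff d ≠ 0`, then `u.coeff 0 ≠ 0`. -/
theorem aux_hg (p : ℕ) (hp : p.Prime) (k : Type*) [Field k] [CharP k p]
    (a d : ℕ) (hda : d + a < p) (α P₂ : k) (u : k[X])
    (hlc : u.coeff d ≠ 0)
    (hode : X * (X - 1) * derivative (derivative u)
        + (C α * X - C ((1 : k) + (a : k))) * derivative u
        + C P₂ * u = 0) :
    u.coeff 0 ≠ 0 := by
  set w := derivative (derivative u) with hw
  set Du := derivative u with hDu
  have h2 : X * (X * w) - X * w
      + (C α * (X * Du) - C ((1 : k) + (a : k)) * Du) + C P₂ * u = 0 := by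
    linear_combination hode
  -- the coefficient recursion
  have hrec : ∀ n : ℕ, ((n : k) + 1) * ((n : k) + 1 + (a : k)) * u.coeff (n + 1)
      = ((n : k) ^ 2 + (α - 1) * (n : k) + P₂) * u.coeff n := by
    intro n
    match n with
    | 0 =>
      have h := congrArg (fun q : k[X] => q.coeff 0) h2
      simp only [coeff_add, coeff_sub, coeff_C_mul, mul_coeff_zero, coeff_X_zero,
        coeff_C, zero_mul, coeff_zero, hDu, coeff_derivative, if_pos rfl] at h
      push_cast at h ⊢
      linear_combination -h
    | 1 =>
      have h := congrArg (fun q : k[X] => q.coeff 1) h2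
      simp only [coeff_add, coeff_sub, coeff_C_mul, coeff_X_mul, mul_coeff_zero,
        coeff_X_zero, coeff_C, zero_mul, coeff_zero, hw, hDu, coeff_derivative] at h
      push_cast at h ⊢
      linear_combination -h
    | (m + 2) =>
      have h := congrArg (fun q : k[X] => q.coeff (m + 2)) h2
      simp only [coeff_add, coeff_sub, coeff_C_mul, coeff_X_mul, coeff_zero,
        hw, hDu, coeff_derivative] at h
      push_cast at h ⊢
      linear_combination -h
  intro h0
  have key : ∀ n, n ≤ d → u.coeff n = 0 := by
    intro n
    induction n with
    | zero => intro _; exact h0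
    | succ m ih =>
      intro hmd
      have hm := hrec m
      rw [ih (by omega), mul_zero] at hm
      have hA1 : ((m : k) + 1) ≠ 0 := by
        have : ((m + 1 : ℕ) : k) ≠ 0 := by
          rw [Ne, CharP.cast_eq_zero_iff k p]
          intro hdvd
          have := Nat.le_of_dvd (by omega) hdvd
          omega
        push_cast at this; exact this
      have hA2 : ((m : k) + 1 + (a : k)) ≠ 0 := by
        have : ((m + 1 + a : ℕ) : k) ≠ 0 := by
          rw [Ne, CharP.cast_eq_zero_iff k p]
          intro hdvd
          have := Nat.le_of_dvd (by omega) hdvd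
          omega
        push_cast at this; exact this
      rcases mul_eq_zero.mp hm with h | h
      · exact absurd (mul_eq_zero.mp h) (by tauto)
      · exact h
  exact hlc (key d le_rfl)

/-- The unique monic degree-`d` polynomial solution of the hypergeometric
equation does not vanish at `0` or at `1`. -/
theorem stmt4 (p : ℕ) (hp : p.Prime) (hodd : Odd p)
    (k : Type*) [Field k] [IsAlgClosed k] [CharP k p]
    (a₁ a₂ a₃ d : ℕ)
    (h₁ : a₁ < p - 1) (h₂ : a₂ < p - 1) (h₃ : a₃ < p - 1)
    (heven : Even (a₁ + a₂ + a₃)) (hsum : a₁ + a₂ + a₃ ≤ p - 1)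
    (hd : 2 * d = p - 1 - (a₁ + a₂ + a₃))
    (P₂ : k) (hP₂ : 4 * P₂ = ((1 : k) + (a₁ : k) + (a₂ : k)) ^ 2 - (a₃ : k) ^ 2)
    (u : k[X]) (hmonic : u.Monic) (hdeg : u.natDegree = d)
    (hode : X * (X - 1) * derivative (derivative u)
        + (C ((2 : k) + (a₁ : k) + (a₂ : k)) * X - C ((1 : k) + (a₁ : k)))
            * derivative u
        + C P₂ * u = 0) :
    u.eval 0 ≠ 0 ∧ u.eval 1 ≠ 0 := by
  have hp2 : 2 ≤ p := hp.two_le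
  have hdsum : 2 * d + (a₁ + a₂ + a₃) = p - 1 := by omega
  have hlc : u.coeff d ≠ 0 := by
    rw [← hdeg, hmonic.coeff_natDegree]; exact one_ne_zero
  constructor
  · rw [← coeff_zero_eq_eval_zero]
    exact aux_hg p hp k a₁ d (by omega) _ P₂ u hlc hode
  · -- substitute x ↦ 1 - x
    set v : k[X] := u.comp (1 - X) with hv
    have hv1 : (derivative u).comp (1 - X) = -derivative v := by
      rw [hv, derivative_comp_one_sub_X, neg_neg]
    have hderv : derivative v = -((derivative u).comp (1 - X)) := by
      rw [hv, derivative_comp_one_sub_X]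
    have hv2 : (derivative (derivative u)).comp (1 - X)
        = derivative (derivative v) := by
      rw [hderv, derivative_neg, derivative_comp_one_sub_X, neg_neg]
    have hcomp := congrArg (fun q : k[X] => q.comp (1 - X)) hode
    simp only [add_comp, mul_comp, sub_comp, X_comp, C_comp, zero_comp,
      one_comp, hv1, hv2] at hcomp
    have e2 : (C ((1 : k) + (a₂ : k)) : k[X])
        = C ((2 : k) + (a₁ : k) + (a₂ : k)) - C ((1 : k) + (a₁ : k)) := by
      rw [← C_sub]; congr 1; ring
    have hodev : X * (X - 1) * derivative (derivative v)
        + (C ((2 : k) + (a₂ : k) + (a₁ : k)) * X - C ((1 : k) + (a₂ : k)))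
            * derivative v
        + C P₂ * v = 0 := by
      have e1 : (C ((2 : k) + (a₂ : k) + (a₁ : k)) : k[X])
          = C ((2 : k) + (a₁ : k) + (a₂ : k)) := by congr 1; ring
      rw [e1, e2]
      linear_combination hcomp
    have hq : (1 - X : k[X]) = -(X - C 1) := by rw [C_1]; ring
    have hq1 : (1 - X : k[X]).natDegree = 1 := by
      rw [hq, natDegree_neg, natDegree_X_sub_C]
    have hdlv : v.natDegree = d := by
      rw [hv, natDegree_comp, hdeg, hq1, mul_one]
    have hlcv : v.coeff d ≠ 0 := by
      rw [← hdlv, ← leadingCoeff]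
      rw [hv, leadingCoeff_comp (by rw [hq1]; exact one_ne_zero),
        hmonic.leadingCoeff, one_mul, hq, leadingCoeff_neg,
        (monic_X_sub_C (1 : k)).leadingCoeff]
      exact pow_ne_zero _ (neg_ne_zero.mpr one_ne_zero)
    have := aux_hg p hp k a₂ d (by omega) _ P₂ v hlcv hodev
    intro h1
    exact this (by rw [coeff_zero_eq_eval_zero, hv, eval_comp]; simpa using h1)
end

section
/- Let p be an odd prime and k of characteristic p. Let u ∈ k[x] be the monic polynomial of degree d = (p-1-a₁-a₂-a₃)/2 solving the hypergeometric equation with parameters determined by integers 0 ≤ a₁,a₂,a₃ < p-1, a₁+a₂+a₃ even and < p-1, and suppose u has only simple roots, all different from 0 and 1. Set Q = x^{1+a₁}(x-1)^{1+a₂}. Then the polynomial G := Q'u' + Qu'' equals g_e · x^{a₁}(x-1)^{a₂} · u, where g_e = d(deg Q + d - 1) ≠ 0 in k. -/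
open Polynomial

/-- For the monic solution `u` of the hypergeometric equation, with only simple
roots all different from `0` and `1`, and `Q = x^{1+a₁}(x-1)^{1+a₂}`, the
polynomial `G = Q'u' + Qu''` equals `g_e x^{a₁}(x-1)^{a₂} u`, where
`g_e = d(deg Q + d - 1) ≠ 0`. -/
theorem stmt6 (p : ℕ) (hp : p.Prime) (hodd : Odd p)
    (k : Type*) [Field k] [IsAlgClosed k] [CharP k p]
    (a₁ a₂ a₃ d : ℕ)
    (h₁ : a₁ < p - 1) (h₂ : a₂ < p - 1) (h₃ : a₃ < p - 1)
    (heven : Even (a₁ + a₂ + a₃)) (hsum : a₁ + a₂ + a₃ < p - 1)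
    (hd : 2 * d = p - 1 - (a₁ + a₂ + a₃))
    (u : k[X]) (hmonic : u.Monic) (hdeg : u.natDegree = d)
    (P₂ : k) (hP₂ : 4 * P₂ = ((1 : k) + (a₁ : k) + (a₂ : k)) ^ 2 - (a₃ : k) ^ 2)
    (hode : X * (X - 1) * derivative (derivative u)
        + (C ((2 : k) + (a₁ : k) + (a₂ : k)) * X - C ((1 : k) + (a₁ : k)))
            * derivative u
        + C P₂ * u = 0)
    (hsimple : ∀ τ : k, u.eval τ = 0 → (derivative u).eval τ ≠ 0)
    (hroots : ∀ τ : k, u.eval τ = 0 → τ ≠ 0 ∧ τ ≠ 1)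
    (Q : k[X]) (hQ : Q = X ^ (1 + a₁) * (X - 1) ^ (1 + a₂))
    (g_e : k) (hg : g_e = (d : k) * ((a₁ : k) + (a₂ : k) + (d : k) + 1)) :
    derivative Q * derivative u + Q * derivative (derivative u)
        = C g_e * X ^ a₁ * (X - 1) ^ a₂ * u ∧ g_e ≠ 0 := by
  have hp2 : 2 ≤ p := hp.two_le
  obtain ⟨m, hm⟩ := hodd
  -- cast identity : 2d = -(1+a₁+a₂+a₃) in k
  have hsle : a₁ + a₂ + a₃ ≤ p - 1 := hsum.le
  have hc : (2 : k) * (d : k) = -(1 + (a₁ : k) + (a₂ : k) + (a₃ : k)) := by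
    have h := congrArg (fun n : ℕ => (n : k)) hd
    rw [Nat.cast_sub hsle, Nat.cast_sub hp.one_le, CharP.cast_eq_zero k p] at h
    push_cast at h
    linear_combination h
  -- d ≠ 0 in k
  have hdb : 0 < d ∧ d < p := by omega
  have hd0 : (d : k) ≠ 0 := by
    rw [Ne, CharP.cast_eq_zero_iff k p]
    intro hdvd
    have := Nat.le_of_dvd hdb.1 hdvd
    omega
  -- 2 ≠ 0 in k
  have h20 : (2 : k) ≠ 0 := by
    rw [show (2 : k) = ((2 : ℕ) : k) by norm_num, Ne, CharP.cast_eq_zero_iff k p]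
    intro hdvd
    have := Nat.le_of_dvd (by norm_num) hdvd
    omega
  -- the second factor of g_e is nonzero
  have hz0 : (1 + (a₁ : ℤ) + a₂ - a₃) ≠ 0 := by
    obtain ⟨r, hr⟩ := heven
    omega
  have hzdvd : ¬ (p : ℤ) ∣ (1 + (a₁ : ℤ) + a₂ - a₃) := by
    intro hdvd
    have h1 := Int.le_of_dvd (abs_pos.mpr hz0) ((dvd_abs _ _).mpr hdvd)
    rcases abs_cases (1 + (a₁ : ℤ) + a₂ - a₃) with ⟨he, _⟩ | ⟨he, _⟩ <;> omega
  have hzk : ((1 + (a₁ : ℤ) + a₂ - a₃ : ℤ) : k) ≠ 0 := by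
    rw [Ne, CharP.intCast_eq_zero_iff k p]
    exact hzdvd
  have hF : ((a₁ : k) + (a₂ : k) + (d : k) + 1) ≠ 0 := by
    intro hF0
    apply hzk
    push_cast
    linear_combination 2 * hF0 - hc
  have hge0 : g_e ≠ 0 := by
    rw [hg]
    exact mul_ne_zero hd0 hF
  -- g_e = -P₂
  have h40 : (4 : k) ≠ 0 := by
    have : (4 : k) = 2 * 2 := by norm_num
    rw [this]
    exact mul_ne_zero h20 h20
  have hge : g_e = -P₂ := by
    apply mul_left_cancel₀ h40
    rw [hg]
    linear_combination hP₂ + (2 * (d : k) + 1 + (a₁ : k) + (a₂ : k) - (a₃ : k)) * hc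
  -- derivative of Q
  have hQ' : derivative Q
      = C ((1 : k) + (a₁ : k)) * X ^ a₁ * (X - 1) ^ (1 + a₂)
        + C ((1 : k) + (a₂ : k)) * X ^ (1 + a₁) * (X - 1) ^ a₂ := by
    rw [hQ]
    rw [derivative_mul, derivative_X_pow, derivative_pow]
    simp only [derivative_sub, derivative_X, derivative_one, sub_zero, mul_one,
      Nat.add_sub_cancel_left, Nat.add_sub_cancel]
    push_cast
    ring
  refine ⟨?_, hge0⟩
  rw [hQ', hQ, hge]
  simp only [C_add, C_1, C_neg, map_ofNat] at hode ⊢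
  linear_combination ((X : k[X]) ^ a₁ * (X - 1) ^ a₂) * hode
end

section
/- Let p ≥ 5 be prime. The smooth projective curve Y over an algebraically closed field k of characteristic p with affine equation y^{p+1} = x^p - x admits a faithful action of SL₂(𝔽_p), where a matrix A = [[a,b],[c,d]] ∈ SL₂(𝔽_p) acts by x ↦ (ax+b)/(cx+d) and y ↦ y/(cx+d). -/
open Polynomial

section Aux

noncomputable def fpoly (p : ℕ) (k : Type*) [Field k] : (Polynomial k)[X] :=
  X ^ (p + 1) - C (Polynomial.X ^ p - Polynomial.X)

lemma fpoly_monic (p : ℕ) (k : Type*) [Field k] : (fpoly p k).Monic :=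
  monic_X_pow_sub_C _ (Nat.succ_ne_zero p)

lemma fpoly_natDegree (p : ℕ) (k : Type*) [Field k] : (fpoly p k).natDegree = p + 1 :=
  natDegree_X_pow_sub_C

lemma fpoly_irred (p : ℕ) (k : Type*) [Field k] (hp : 2 ≤ p) : Irreducible (fpoly p k) := by
  have hXprime : Prime (Polynomial.X : Polynomial k) := prime_X
  have hprime : (Ideal.span {(Polynomial.X : Polynomial k)}).IsPrime :=
    (Ideal.span_singleton_prime hXprime.ne_zero).mpr hXprime
  have heis : (fpoly p k).IsEisensteinAt (Ideal.span {(Polynomial.X : Polynomial k)}) := by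
    constructor
    · rw [(fpoly_monic p k).leadingCoeff]
      intro h1
      exact hprime.ne_top (Ideal.eq_top_of_isUnit_mem _ h1 isUnit_one)
    · intro n hn
      rw [fpoly_natDegree] at hn
      rw [fpoly, coeff_sub, coeff_X_pow, if_neg (by omega), coeff_C]
      rcases eq_or_ne n 0 with rfl | hn0
      · rw [if_pos rfl, zero_sub]
        rw [Ideal.mem_span_singleton]
        have hx : (Polynomial.X : Polynomial k) ^ p = Polynomial.X * Polynomial.X ^ (p - 1) := by
          rw [← pow_succ']; congr 1; omega
        exact ⟨1 - Polynomial.X ^ (p-1), by rw [hx]; ring⟩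
      · simp [hn0]
    · rw [fpoly, coeff_sub, coeff_X_pow, if_neg (by omega), coeff_C, if_pos rfl, zero_sub,
        Ideal.span_singleton_pow, Ideal.mem_span_singleton]
      rintro ⟨h, hh⟩
      have := congrArg (fun q => Polynomial.coeff q 1) hh
      simp only [coeff_neg, coeff_sub, coeff_X_pow, coeff_X_one] at this
      rw [show (Polynomial.X : Polynomial k) ^ 2 * h = h * Polynomial.X ^ 2 by ring,
        coeff_mul_X_pow'] at this
      rw [if_neg (by omega : ¬ (1:ℕ) = p)] at this
      norm_num at this
  exact heis.irreducible hprime (fpoly_monic p k).isPrimitive (by rw [fpoly_natDegree]; omega)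

noncomputable def gpoly (p : ℕ) (k : Type*) [Field k] : (RatFunc k)[X] :=
  (fpoly p k).map (algebraMap (Polynomial k) (RatFunc k))

lemma gpoly_eq (p : ℕ) (k : Type*) [Field k] :
    gpoly p k = X ^ (p + 1)
      - C (algebraMap (Polynomial k) (RatFunc k) (Polynomial.X ^ p - Polynomial.X)) := by
  simp [gpoly, fpoly, Polynomial.map_sub, Polynomial.map_pow, map_X, map_C]

lemma gpoly_irred (p : ℕ) (k : Type*) [Field k] (hp : 2 ≤ p) : Irreducible (gpoly p k) :=
  ((fpoly_monic p k).irreducible_iff_irreducible_map_fraction_map).mp (fpoly_irred p k hp)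

variable {p : ℕ} {k F : Type*} [Field k] [Field F] [Algebra k F]

noncomputable def baseHom (x' : F) (hx' : Transcendental k x') : RatFunc k →+* F :=
  IsFractionRing.lift (A := Polynomial k) (K := RatFunc k) (g := (Polynomial.aeval x').toRingHom)
    (transcendental_iff_injective.mp hx')

lemma baseHom_algebraMap (x' : F) (hx' : Transcendental k x') (q : Polynomial k) :
    baseHom x' hx' (algebraMap (Polynomial k) (RatFunc k) q) = Polynomial.aeval x' q :=
  IsFractionRing.lift_algebraMap _ _

noncomputable def liftHom (x' y' : F) (hx' : Transcendental k x')
    (hrel : y' ^ (p + 1) = x' ^ p - x') : AdjoinRoot (gpoly p k) →+* F :=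
  AdjoinRoot.lift (baseHom x' hx') y' (by
    rw [gpoly_eq, eval₂_sub, eval₂_pow, eval₂_X, eval₂_C, baseHom_algebraMap]
    simp only [map_sub, map_pow, aeval_X]
    rw [hrel]; ring)

lemma liftHom_of (x' y' : F) (hx' : Transcendental k x')
    (hrel : y' ^ (p + 1) = x' ^ p - x') (r : RatFunc k) :
    liftHom x' y' hx' hrel (AdjoinRoot.of _ r) = baseHom x' hx' r :=
  AdjoinRoot.lift_of _

lemma liftHom_X (x' y' : F) (hx' : Transcendental k x')
    (hrel : y' ^ (p + 1) = x' ^ p - x') :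
    liftHom x' y' hx' hrel (AdjoinRoot.of _ (algebraMap (Polynomial k) (RatFunc k)
      Polynomial.X)) = x' := by
  rw [liftHom_of, baseHom_algebraMap, aeval_X]

lemma liftHom_const (x' y' : F) (hx' : Transcendental k x')
    (hrel : y' ^ (p + 1) = x' ^ p - x') (c : k) :
    liftHom x' y' hx' hrel (AdjoinRoot.of _ (algebraMap k (RatFunc k) c))
      = algebraMap k F c := by
  rw [show algebraMap k (RatFunc k) c
      = algebraMap (Polynomial k) (RatFunc k) (Polynomial.C c) by
    simp [IsScalarTower.algebraMap_apply k (Polynomial k) (RatFunc k)]]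
  rw [liftHom_of, baseHom_algebraMap, aeval_C]

lemma liftHom_root (x' y' : F) (hx' : Transcendental k x')
    (hrel : y' ^ (p + 1) = x' ^ p - x') :
    liftHom x' y' hx' hrel (AdjoinRoot.root _) = y' :=
  AdjoinRoot.lift_root _

lemma liftHom_bijective [Fact (Irreducible (gpoly p k))] {x y : F}
    (hx : Transcendental k x) (hxy : y ^ (p + 1) = x ^ p - x)
    (hgen : IntermediateField.adjoin k {x, y} = ⊤) :
    Function.Bijective (liftHom x y hx hxy) := by
  refine ⟨(liftHom x y hx hxy).injective, ?_⟩
  set f := liftHom x y hx hxy with hf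
  let S : IntermediateField k F := f.fieldRange.toIntermediateField
    (fun c => ⟨AdjoinRoot.of _ (algebraMap k (RatFunc k) c), liftHom_const x y hx hxy c⟩)
  have hle : IntermediateField.adjoin k {x, y} ≤ S :=
    IntermediateField.adjoin_le_iff.mpr (by
      rintro z (rfl | rfl)
      · exact ⟨_, liftHom_X _ _ hx hxy⟩
      · exact ⟨_, liftHom_root _ _ hx hxy⟩)
  rw [hgen] at hle
  intro z
  exact hle (IntermediateField.mem_top (x := z))

lemma homext {x y : F} (hgen : IntermediateField.adjoin k {x, y} = ⊤)
    (σ τ : F →+* F)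
    (hk : ∀ c : k, σ (algebraMap k F c) = τ (algebraMap k F c))
    (h1 : σ x = τ x) (h2 : σ y = τ y) : σ = τ := by
  have key : ∀ z : F, σ z = τ z := by
    let S : IntermediateField k F :=
      (RingHom.eqLocusField σ τ).toIntermediateField (fun c => hk c)
    have hle : IntermediateField.adjoin k {x, y} ≤ S :=
      IntermediateField.adjoin_le_iff.mpr (by
        rintro z (rfl | rfl)
        · exact h1
        · exact h2)
    rw [hgen] at hle
    exact fun z => hle (IntermediateField.mem_top (x := z))
  exact RingHom.ext key

lemma mobius_trans {x : F} (hx : Transcendental k x) (a b c d : k)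
    (hdet : a * d - b * c = 1)
    (hu : algebraMap k F c * x + algebraMap k F d ≠ 0) :
    Transcendental k ((algebraMap k F a * x + algebraMap k F b)
      * (algebraMap k F c * x + algebraMap k F d)⁻¹) := by
  set A' := algebraMap k F a
  set B' := algebraMap k F b
  set C' := algebraMap k F c
  set D' := algebraMap k F d
  set u := C' * x + D' with hu_def
  set x' := (A' * x + B') * u⁻¹ with hx'_def
  intro halg
  have hdetF : A' * D' - B' * C' = 1 := by
    have := congrArg (algebraMap k F) hdet
    simpa [map_sub, map_mul, map_one] using this
  have hint : IsIntegral k x' := halg.isIntegral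
  haveI := IntermediateField.adjoin.finiteDimensional hint
  have h1 : x' * u = A' * x + B' := by
    rw [hx'_def, mul_assoc, inv_mul_cancel₀ hu, mul_one]
  have hden : C' * x' - A' = -u⁻¹ := by
    have h2 : (C' * x' - A') * u = -1 := by
      rw [sub_mul, mul_assoc, h1]; rw [hu_def]; linear_combination -hdetF
    field_simp at h2 ⊢
    linear_combination h2
  have hdne : C' * x' - A' ≠ 0 := by
    rw [hden]; exact neg_ne_zero.mpr (inv_ne_zero hu)
  have hxeq : x = (B' - D' * x') * (C' * x' - A')⁻¹ := by
    rw [eq_mul_inv_iff_mul_eq₀ hdne]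
    rw [hu_def] at h1
    linear_combination h1
  have hxmem : x ∈ IntermediateField.adjoin k {x'} := by
    rw [hxeq]
    have hx'mem : x' ∈ IntermediateField.adjoin k {x'} :=
      IntermediateField.mem_adjoin_simple_self k x'
    exact mul_mem
      (sub_mem (IntermediateField.algebraMap_mem _ b)
        (mul_mem (IntermediateField.algebraMap_mem _ d) hx'mem))
      (inv_mem (sub_mem (mul_mem (IntermediateField.algebraMap_mem _ c) hx'mem)
        (IntermediateField.algebraMap_mem _ a)))
  have : IsAlgebraic k x := by
    have hz := IsIntegral.of_finite k
      (⟨x, hxmem⟩ : IntermediateField.adjoin k {x'})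
    exact IntermediateField.isAlgebraic_iff.mp hz.isAlgebraic
  exact hx this

lemma rel_aux [CharP F p] (hp : p.Prime) {x y : F} (hxy : y ^ (p + 1) = x ^ p - x)
    {A' B' C' D' : F} (hdet : A' * D' - B' * C' = 1)
    (hA : A' ^ p = A') (hB : B' ^ p = B') (hC : C' ^ p = C') (hD : D' ^ p = D')
    (hu : C' * x + D' ≠ 0) :
    (y * (C' * x + D')⁻¹) ^ (p + 1)
      = ((A' * x + B') * (C' * x + D')⁻¹) ^ p
        - (A' * x + B') * (C' * x + D')⁻¹ := by
  set u := C' * x + D' with hu_def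
  haveI : Fact p.Prime := ⟨hp⟩
  have hfrob : ∀ s t : F, s ^ p = s → t ^ p = t → (s * x + t) ^ p = s * x ^ p + t := by
    intro s t hs ht
    rw [add_pow_char, mul_pow, hs, ht]
  have hup : u ^ p = C' * x ^ p + D' := hfrob C' D' hC hD
  have hkey : (A' * x + B') ^ p * u - (A' * x + B') * u ^ p = x ^ p - x := by
    rw [hfrob A' B' hA hB, hup, hu_def]
    linear_combination (x ^ p - x) * hdet
  have hup1 : u ^ (p + 1) ≠ 0 := pow_ne_zero _ hu
  have h2 : (u ^ p)⁻¹ = u * (u ^ (p + 1))⁻¹ := by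
    rw [pow_succ]
    field_simp
  have h3 : u⁻¹ = u ^ p * (u ^ (p + 1))⁻¹ := by
    rw [pow_succ]
    field_simp
  rw [mul_pow, inv_pow, mul_pow, inv_pow, hxy, h2, h3]
  linear_combination -(u ^ (p + 1))⁻¹ * hkey

lemma mobius_comp_x {x : F} (a1 b1 c1 d1 a2 b2 c2 d2 : F)
    (hu2 : c2 * x + d2 ≠ 0)
    (hu12 : (c1 * a2 + d1 * c2) * x + (c1 * b2 + d1 * d2) ≠ 0) :
    ((a1 * a2 + b1 * c2) * x + (a1 * b2 + b1 * d2))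
        * ((c1 * a2 + d1 * c2) * x + (c1 * b2 + d1 * d2))⁻¹
      = (a1 * ((a2 * x + b2) * (c2 * x + d2)⁻¹) + b1)
        * (c1 * ((a2 * x + b2) * (c2 * x + d2)⁻¹) + d1)⁻¹ := by
  have hW : (c1 * ((a2 * x + b2) * (c2 * x + d2)⁻¹) + d1) * (c2 * x + d2)
      = (c1 * a2 + d1 * c2) * x + (c1 * b2 + d1 * d2) := by
    linear_combination c1 * (a2 * x + b2) * (inv_mul_cancel₀ hu2)
  rw [← hW, mul_inv_rev]
  rw [show (a1 * a2 + b1 * c2) * x + (a1 * b2 + b1 * d2)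
      = a1 * (a2 * x + b2) + b1 * (c2 * x + d2) from by ring]
  rw [← mul_assoc]
  congr 1
  linear_combination b1 * (mul_inv_cancel₀ hu2)

lemma mobius_comp_y {x y : F} (c1 d1 a2 b2 c2 d2 : F)
    (hu2 : c2 * x + d2 ≠ 0)
    (hu12 : (c1 * a2 + d1 * c2) * x + (c1 * b2 + d1 * d2) ≠ 0) :
    y * ((c1 * a2 + d1 * c2) * x + (c1 * b2 + d1 * d2))⁻¹
      = (y * (c2 * x + d2)⁻¹)
        * (c1 * ((a2 * x + b2) * (c2 * x + d2)⁻¹) + d1)⁻¹ := by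
  have hW : (c1 * ((a2 * x + b2) * (c2 * x + d2)⁻¹) + d1) * (c2 * x + d2)
      = (c1 * a2 + d1 * c2) * x + (c1 * b2 + d1 * d2) := by
    linear_combination c1 * (a2 * x + b2) * (inv_mul_cancel₀ hu2)
  rw [← hW, mul_inv_rev, ← mul_assoc]

end Aux

/-- The function field of the curve `y^{p+1} = x^p - x` over an algebraically closed
field `k` of characteristic `p ≥ 5` admits a faithful action of `SL₂(𝔽_p)` (with
`(AB)* = B* A*`), where `A = [[a,b],[c,d]]` acts by `x ↦ (ax+b)/(cx+d)` and
`y ↦ y/(cx+d)`. -/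
theorem stmt7 (p : ℕ) (hp : p.Prime) (h5 : 5 ≤ p)
    (k : Type*) [Field k] [IsAlgClosed k] [CharP k p]
    (F : Type*) [Field F] [Algebra k F] (x y : F)
    (hxy : y ^ (p + 1) = x ^ p - x)
    (hx : Transcendental k x)
    (hgen : IntermediateField.adjoin k {x, y} = ⊤) :
    ∃ φ : Matrix.SpecialLinearGroup (Fin 2) (ZMod p) → (F ≃ₐ[k] F),
      Function.Injective φ ∧
      φ 1 = AlgEquiv.refl ∧
      (∀ A B, φ (A * B) = (φ A).trans (φ B)) ∧
      (∀ A : Matrix.SpecialLinearGroup (Fin 2) (ZMod p),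
        (algebraMap k F (ZMod.cast (A.1 1 0)) * x
            + algebraMap k F (ZMod.cast (A.1 1 1))) * (φ A x)
          = algebraMap k F (ZMod.cast (A.1 0 0)) * x
            + algebraMap k F (ZMod.cast (A.1 0 1)) ∧
        (algebraMap k F (ZMod.cast (A.1 1 0)) * x
            + algebraMap k F (ZMod.cast (A.1 1 1))) * (φ A y) = y) := by
  classical
  haveI fact_p : Fact p.Prime := ⟨hp⟩
  haveI : CharP F p := charP_of_injective_algebraMap (algebraMap k F).injective p
  haveI : Fact (Irreducible (gpoly p k)) := ⟨gpoly_irred p k hp.two_le⟩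
  set jh : ZMod p →+* k := ZMod.castHom dvd_rfl k with hjh_def
  set J : ZMod p → F := fun t => algebraMap k F (jh t) with hJ_def
  have hJcast : ∀ t : ZMod p, algebraMap k F (ZMod.cast t) = J t := fun t => by
    simp only [hJ_def, hjh_def, ZMod.castHom_apply]
  have hJadd : ∀ s t, J (s + t) = J s + J t := fun s t => by
    simp only [hJ_def, map_add]
  have hJmul : ∀ s t, J (s * t) = J s * J t := fun s t => by
    simp only [hJ_def, map_mul]
  have hJsub : ∀ s t, J (s - t) = J s - J t := fun s t => by
    simp only [hJ_def, map_sub]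
  have hJone : J 1 = 1 := by simp only [hJ_def, map_one]
  have hJzero : J 0 = 0 := by simp only [hJ_def, map_zero]
  have hkinj := (algebraMap k F).injective
  have hJinj : Function.Injective J := fun s t h => by
    apply jh.injective
    apply hkinj
    simpa only [hJ_def] using h
  have hJp : ∀ t, J t ^ p = J t := fun t => by
    simp only [hJ_def]
    rw [← map_pow, ← map_pow, ZMod.pow_card]
  have hxalg : ∀ c : k, x ≠ algebraMap k F c := fun c h =>
    hx (h ▸ isAlgebraic_algebraMap c)
  have den_ne : ∀ c d : ZMod p, (c ≠ 0 ∨ d ≠ 0) → J c * x + J d ≠ 0 := by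
    intro c d hcd h0
    rcases eq_or_ne c 0 with rfl | hc
    · rw [hJzero, zero_mul, zero_add] at h0
      exact (hcd.resolve_left (fun h => h rfl)) (hJinj (h0.trans hJzero.symm))
    · have hck : jh c ≠ 0 := fun h => hc (jh.injective (by rw [h, map_zero]))
      have hcF : algebraMap k F (jh c) ≠ 0 := fun h => hck (hkinj (by rw [h, map_zero]))
      apply hxalg (-(jh d) / jh c)
      rw [map_div₀, map_neg, eq_div_iff hcF]
      simp only [hJ_def] at h0
      linear_combination h0
  have hdet : ∀ A : Matrix.SpecialLinearGroup (Fin 2) (ZMod p),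
      A.1 0 0 * A.1 1 1 - A.1 0 1 * A.1 1 0 = 1 := by
    intro A
    have h := A.2
    rw [Matrix.det_fin_two] at h
    exact h
  have hrow : ∀ A : Matrix.SpecialLinearGroup (Fin 2) (ZMod p),
      A.1 1 0 ≠ 0 ∨ A.1 1 1 ≠ 0 := by
    intro A
    by_contra hcon
    push_neg at hcon
    have h := hdet A
    rw [hcon.1, hcon.2] at h
    simp at h
  have hu : ∀ A : Matrix.SpecialLinearGroup (Fin 2) (ZMod p),
      J (A.1 1 0) * x + J (A.1 1 1) ≠ 0 := fun A => den_ne _ _ (hrow A)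
  have hdetF : ∀ A : Matrix.SpecialLinearGroup (Fin 2) (ZMod p),
      J (A.1 0 0) * J (A.1 1 1) - J (A.1 0 1) * J (A.1 1 0) = 1 := fun A => by
    rw [← hJmul, ← hJmul, ← hJsub, hdet A, hJone]
  have relA : ∀ A : Matrix.SpecialLinearGroup (Fin 2) (ZMod p),
      (y * (J (A.1 1 0) * x + J (A.1 1 1))⁻¹) ^ (p + 1)
        = ((J (A.1 0 0) * x + J (A.1 0 1)) * (J (A.1 1 0) * x + J (A.1 1 1))⁻¹) ^ p
          - (J (A.1 0 0) * x + J (A.1 0 1)) * (J (A.1 1 0) * x + J (A.1 1 1))⁻¹ :=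
    fun A => rel_aux hp hxy (hdetF A) (hJp _) (hJp _) (hJp _) (hJp _) (hu A)
  have transA : ∀ A : Matrix.SpecialLinearGroup (Fin 2) (ZMod p),
      Transcendental k
        ((J (A.1 0 0) * x + J (A.1 0 1)) * (J (A.1 1 0) * x + J (A.1 1 1))⁻¹) := by
    intro A
    have hdetk : jh (A.1 0 0) * jh (A.1 1 1) - jh (A.1 0 1) * jh (A.1 1 0) = 1 := by
      rw [← map_mul, ← map_mul, ← map_sub, hdet A, map_one]
    exact mobius_trans hx _ _ _ _ hdetk (hu A)
  set e := liftHom x y hx hxy with he_def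
  have hbij : Function.Bijective e := liftHom_bijective hx hxy hgen
  set eiso := RingEquiv.ofBijective e hbij with heiso_def
  have hsymmX : eiso.symm x
      = AdjoinRoot.of (gpoly p k) (algebraMap (Polynomial k) (RatFunc k) Polynomial.X) := by
    apply eiso.injective
    rw [RingEquiv.apply_symm_apply]
    exact (liftHom_X _ _ hx hxy).symm
  have hsymmRoot : eiso.symm y = AdjoinRoot.root (gpoly p k) := by
    apply eiso.injective
    rw [RingEquiv.apply_symm_apply]
    exact (liftHom_root _ _ hx hxy).symm
  have hsymmC : ∀ c : k, eiso.symm (algebraMap k F c)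
      = AdjoinRoot.of (gpoly p k) (algebraMap k (RatFunc k) c) := by
    intro c
    apply eiso.injective
    rw [RingEquiv.apply_symm_apply]
    exact (liftHom_const _ _ hx hxy c).symm
  set τ : Matrix.SpecialLinearGroup (Fin 2) (ZMod p) → (F →+* F) := fun A =>
    (liftHom _ _ (transA A) (relA A)).comp eiso.symm.toRingHom with hτ_def
  have hτx : ∀ A, τ A x
      = (J (A.1 0 0) * x + J (A.1 0 1)) * (J (A.1 1 0) * x + J (A.1 1 1))⁻¹ := by
    intro A
    simp only [hτ_def, RingHom.comp_apply, RingEquiv.toRingHom_eq_coe,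
      RingHom.coe_coe]
    rw [hsymmX, liftHom_X]
  have hτy : ∀ A, τ A y = y * (J (A.1 1 0) * x + J (A.1 1 1))⁻¹ := by
    intro A
    simp only [hτ_def, RingHom.comp_apply, RingEquiv.toRingHom_eq_coe,
      RingHom.coe_coe]
    rw [hsymmRoot, liftHom_root]
  have hτc : ∀ A (c : k), τ A (algebraMap k F c) = algebraMap k F c := by
    intro A c
    simp only [hτ_def, RingHom.comp_apply, RingEquiv.toRingHom_eq_coe,
      RingHom.coe_coe]
    rw [hsymmC, liftHom_const]
  have hτJ : ∀ A t, τ A (J t) = J t := fun A t => by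
    simp only [hJ_def]
    exact hτc A (jh t)
  have hmulent : ∀ (A B : Matrix.SpecialLinearGroup (Fin 2) (ZMod p)) (i j : Fin 2),
      (A * B).1 i j = A.1 i 0 * B.1 0 j + A.1 i 1 * B.1 1 j := by
    intro A B i j
    rw [Matrix.SpecialLinearGroup.coe_mul, Matrix.mul_apply, Fin.sum_univ_two]
  have hpushτ : ∀ (B : Matrix.SpecialLinearGroup (Fin 2) (ZMod p)) (s t s' t' : ZMod p),
      τ B ((J s * x + J t) * (J s' * x + J t')⁻¹)
        = (J s * τ B x + J t) * (J s' * τ B x + J t')⁻¹ := by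
    intro B s t s' t'
    rw [map_mul, map_inv₀, map_add, map_mul, map_add, map_mul, hτJ, hτJ, hτJ, hτJ]
  have huAB : ∀ A B : Matrix.SpecialLinearGroup (Fin 2) (ZMod p),
      (J (A.1 1 0) * J (B.1 0 0) + J (A.1 1 1) * J (B.1 1 0)) * x
        + (J (A.1 1 0) * J (B.1 0 1) + J (A.1 1 1) * J (B.1 1 1)) ≠ 0 := by
    intro A B
    have h := hu (A * B)
    simp only [hmulent, hJadd, hJmul] at h
    exact h
  have hanti : ∀ A B, τ (A * B) = (τ B).comp (τ A) := by
    intro A B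
    apply homext hgen
    · intro c
      rw [hτc (A * B), RingHom.comp_apply, hτc, hτc]
    · rw [hτx (A * B), RingHom.comp_apply, hτx A, hpushτ, hτx B]
      simp only [hmulent, hJadd, hJmul]
      exact mobius_comp_x _ _ _ _ _ _ _ _ (hu B) (huAB A B)
    · rw [hτy (A * B), RingHom.comp_apply, hτy A, map_mul, map_inv₀, map_add, map_mul, hτJ, hτJ,
        hτy B, hτx B]
      simp only [hmulent, hJadd, hJmul]
      exact mobius_comp_y _ _ _ _ _ _ (hu B) (huAB A B)
  have hone : ∀ i j : Fin 2,
      ((1 : Matrix.SpecialLinearGroup (Fin 2) (ZMod p))).1 i j = if i = j then 1 else 0 := by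
    intro i j
    rw [Matrix.SpecialLinearGroup.coe_one, Matrix.one_apply]
  have hτ1 : τ 1 = RingHom.id F := by
    apply homext hgen
    · intro c
      rw [hτc, RingHom.id_apply]
    · rw [hτx 1, RingHom.id_apply, hone 0 0, if_pos rfl, hone 0 1,
        if_neg (by decide), hone 1 0, if_neg (by decide), hone 1 1, if_pos rfl,
        hJone, hJzero]
      simp
    · rw [hτy 1, RingHom.id_apply, hone 1 0, if_neg (by decide), hone 1 1, if_pos rfl,
        hJone, hJzero]
      simp
  have hsmul : ∀ A (c : k) (z : F), τ A (c • z) = c • τ A z := by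
    intro A c z
    rw [Algebra.smul_def, Algebra.smul_def, map_mul, hτc]
  set α : Matrix.SpecialLinearGroup (Fin 2) (ZMod p) → (F →ₐ[k] F) := fun A =>
    AlgHom.mk' (τ A) (hsmul A) with hα_def
  have hid1 : ∀ A : Matrix.SpecialLinearGroup (Fin 2) (ZMod p),
      (τ A).comp (τ A⁻¹) = RingHom.id F := by
    intro A
    rw [← hanti A⁻¹ A, inv_mul_cancel, hτ1]
  have hid2 : ∀ A : Matrix.SpecialLinearGroup (Fin 2) (ZMod p),
      (τ A⁻¹).comp (τ A) = RingHom.id F := by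
    intro A
    rw [← hanti A A⁻¹, mul_inv_cancel, hτ1]
  set φ : Matrix.SpecialLinearGroup (Fin 2) (ZMod p) → (F ≃ₐ[k] F) := fun A =>
    AlgEquiv.ofAlgHom (α A) (α A⁻¹)
      (AlgHom.ext fun z => RingHom.congr_fun (hid1 A) z)
      (AlgHom.ext fun z => RingHom.congr_fun (hid2 A) z) with hφ_def
  have hφapp : ∀ A z, φ A z = τ A z := fun A z => rfl
  refine ⟨φ, ?_, ?_, ?_, ?_⟩
  · -- injectivity
    intro A B hAB
    have hxAB : τ A x = τ B x := by rw [← hφapp A x, ← hφapp B x, hAB]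
    have hyAB : τ A y = τ B y := by rw [← hφapp A y, ← hφapp B y, hAB]
    have hy0 : y ≠ 0 := by
      intro h0
      rw [h0, zero_pow (Nat.succ_ne_zero p)] at hxy
      apply hx
      refine ⟨Polynomial.X ^ p - Polynomial.X, ?_, ?_⟩
      · intro hq
        have hc := congrArg (fun q => Polynomial.coeff q 1) hq
        simp only [Polynomial.coeff_sub, Polynomial.coeff_X_pow, Polynomial.coeff_X_one,
          Polynomial.coeff_zero] at hc
        rw [if_neg (by omega : ¬ 1 = p)] at hc
        norm_num at hc
      · simp only [map_sub, map_pow, Polynomial.aeval_X]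
        linear_combination -hxy
    have hueq : J (A.1 1 0) * x + J (A.1 1 1) = J (B.1 1 0) * x + J (B.1 1 1) := by
      rw [hτy A, hτy B] at hyAB
      exact inv_injective (mul_left_cancel₀ hy0 hyAB)
    have hlin : ∀ s t s' t' : ZMod p, J s * x + J t = J s' * x + J t' → s = s' ∧ t = t' := by
      intro s t s' t' h
      have hs : s = s' := by
        by_contra hss
        have h1 : jh s - jh s' ≠ 0 := by
          intro h0
          rw [sub_eq_zero] at h0
          exact hss (jh.injective h0)
        have h2 : algebraMap k F (jh s) - algebraMap k F (jh s') ≠ 0 := by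
          rw [← map_sub]
          exact fun hh => h1 (hkinj (by rw [hh, map_zero]))
        apply hxalg ((jh t' - jh t) / (jh s - jh s'))
        rw [map_div₀, map_sub, map_sub, eq_div_iff h2]
        simp only [hJ_def] at h
        linear_combination h
      subst hs
      refine ⟨rfl, hJinj ?_⟩
      linear_combination h
    obtain ⟨hc, hd⟩ := hlin _ _ _ _ hueq
    have hnum : J (A.1 0 0) * x + J (A.1 0 1) = J (B.1 0 0) * x + J (B.1 0 1) := by
      rw [hτx A, hτx B, hueq] at hxAB
      exact mul_right_cancel₀ (inv_ne_zero (hu B)) hxAB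
    obtain ⟨ha, hb⟩ := hlin _ _ _ _ hnum
    apply Subtype.ext
    ext i j
    fin_cases i <;> fin_cases j <;> assumption
  · -- φ 1 = refl
    apply AlgEquiv.ext
    intro z
    rw [hφapp]
    rw [hτ1]
    rfl
  · -- anti-multiplicativity
    intro A B
    apply AlgEquiv.ext
    intro z
    rw [hφapp]
    rw [hanti A B]
    rfl
  · -- action formulas
    intro A
    simp only [hJcast]
    constructor
    · rw [hφapp, hτx A, mul_comm (J (A.1 1 0) * x + J (A.1 1 1)), mul_assoc,
        inv_mul_cancel₀ (hu A), mul_one]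
    · rw [hφapp, hτy A, mul_comm (J (A.1 1 0) * x + J (A.1 1 1)), mul_assoc,
        inv_mul_cancel₀ (hu A), mul_one]
end

section
/- Let p ≥ 5 be prime and k algebraically closed of characteristic p. For the curve Y: y^{p+1} = x^p - x with the SL₂(𝔽_p)-action given by A·(x,y) = ((ax+b)/(cx+d), y/(cx+d)), the quotient map Y → Y/SL₂(𝔽_p) ≅ ℙ¹ is branched at exactly one point, and the inertia group of a point above that branch point has order p(p-1). -/
/-- The points of the smooth projective model of the curve `y^{p+1} = x^p - x`:
the affine points together with the single point `∞` at infinity. -/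
def YPt (p : ℕ) (k : Type*) [Field k] : Type _ :=
  Option {v : k × k // v.2 ^ (p + 1) = v.1 ^ p - v.1}

section Aux
variable (p : ℕ) [Fact p.Prime] (k : Type*) [Field k] [CharP k p]

/-- The canonical embedding of `𝔽_p` into `k`. -/
def emb : ZMod p →+* k := ZMod.castHom (dvd_refl p) k

variable {p k}

lemma emb_pow (t : ZMod p) : (emb p k t) ^ p = emb p k t := by
  rw [← map_pow, ZMod.pow_card]

lemma emb_inj : Function.Injective (emb p k) := (emb p k).injective

lemma detk (A : Matrix.SpecialLinearGroup (Fin 2) (ZMod p)) :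
    emb p k (A.1 0 0) * emb p k (A.1 1 1) - emb p k (A.1 0 1) * emb p k (A.1 1 0) = 1 := by
  have h := A.2
  rw [Matrix.det_fin_two] at h
  rw [← map_mul, ← map_mul, ← map_sub, h, map_one]

lemma mulEntry (A B : Matrix.SpecialLinearGroup (Fin 2) (ZMod p)) (i j : Fin 2) :
    emb p k ((A * B).1 i j)
      = emb p k (A.1 i 0) * emb p k (B.1 0 j) + emb p k (A.1 i 1) * emb p k (B.1 1 j) := by
  rw [Matrix.SpecialLinearGroup.coe_mul, Matrix.mul_apply, Fin.sum_univ_two, map_add,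
    map_mul, map_mul]

lemma curveKey {a b c d x y : k} (hdet : a*d - b*c = 1)
    (hap : a^p = a) (hbp : b^p = b) (hcp : c^p = c) (hdp : d^p = d)
    (hv : y^(p+1) = x^p - x) (hw : c*x + d ≠ 0) :
    (y/(c*x+d))^(p+1) = ((a*x+b)/(c*x+d))^p - (a*x+b)/(c*x+d) := by
  have h1 : (a*x+b)^p = a*x^p + b := by rw [add_pow_char (a*x) b p, mul_pow, hap, hbp]
  have h2 : (c*x+d)^p = c*x^p + d := by rw [add_pow_char (c*x) d p, mul_pow, hcp, hdp]
  rw [div_pow, div_pow]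
  rw [div_sub_div _ _ (pow_ne_zero _ hw) hw, div_eq_div_iff (pow_ne_zero _ hw)
    (mul_ne_zero (pow_ne_zero _ hw) hw)]
  rw [pow_succ, pow_succ, h1, h2]
  linear_combination ((c*x^p+d)*(c*x+d)) * hv + (x - x^p) * ((c*x^p+d)*(c*x+d)) * hdet

open scoped Classical in
noncomputable def FmapInf (A : Matrix.SpecialLinearGroup (Fin 2) (ZMod p)) : YPt p k :=
  if hc : emb p k (A.1 1 0) = 0 then none else
    some ⟨(emb p k (A.1 0 0) / emb p k (A.1 1 0), 0), by
      rw [zero_pow (Nat.succ_ne_zero p), div_pow, emb_pow, emb_pow, sub_self]⟩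

open scoped Classical in
noncomputable def FmapAff (A : Matrix.SpecialLinearGroup (Fin 2) (ZMod p))
    (v : {v : k × k // v.2 ^ (p + 1) = v.1 ^ p - v.1}) : YPt p k :=
  if hw : emb p k (A.1 1 0) * v.1.1 + emb p k (A.1 1 1) = 0 then none else
    some ⟨((emb p k (A.1 0 0) * v.1.1 + emb p k (A.1 0 1))
            / (emb p k (A.1 1 0) * v.1.1 + emb p k (A.1 1 1)),
          v.1.2 / (emb p k (A.1 1 0) * v.1.1 + emb p k (A.1 1 1))),
      curveKey (detk A) (emb_pow _) (emb_pow _) (emb_pow _) (emb_pow _) v.2 hw⟩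

noncomputable def Fmap (A : Matrix.SpecialLinearGroup (Fin 2) (ZMod p)) :
    YPt p k → YPt p k :=
  fun q => Option.elim q (FmapInf A) (FmapAff A)

lemma Fmap_none (A : Matrix.SpecialLinearGroup (Fin 2) (ZMod p)) :
    Fmap A (none : YPt p k) = FmapInf A := rfl

lemma Fmap_some (A : Matrix.SpecialLinearGroup (Fin 2) (ZMod p)) (v) :
    Fmap A (some v : YPt p k) = FmapAff A v := rfl


lemma Fmap_one (q : YPt p k) : Fmap (1 : Matrix.SpecialLinearGroup (Fin 2) (ZMod p)) q = q := by
  have h00 : ((1 : Matrix.SpecialLinearGroup (Fin 2) (ZMod p)).1 0 0) = 1 := by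
    simp [Matrix.SpecialLinearGroup.coe_one]
  have h01 : ((1 : Matrix.SpecialLinearGroup (Fin 2) (ZMod p)).1 0 1) = 0 := by
    simp [Matrix.SpecialLinearGroup.coe_one, Matrix.one_apply]
  have h10 : ((1 : Matrix.SpecialLinearGroup (Fin 2) (ZMod p)).1 1 0) = 0 := by
    simp [Matrix.SpecialLinearGroup.coe_one, Matrix.one_apply]
  have h11 : ((1 : Matrix.SpecialLinearGroup (Fin 2) (ZMod p)).1 1 1) = 1 := by
    simp [Matrix.SpecialLinearGroup.coe_one]
  obtain _ | ⟨⟨x, y⟩, hv⟩ := q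
  · rw [Fmap_none]
    simp only [FmapInf, h10, map_zero]
    simp
    rfl
  · rw [Fmap_some]
    simp only [FmapAff, h10, h11, h00, h01, map_zero, map_one]
    erw [dif_neg (by simp)]
    simp
    rfl


omit [Fact (Nat.Prime p)] [CharP k p] in
lemma some_eq' {u v u' v' : k} {h : v ^ (p+1) = u^p - u} {h' : v' ^ (p+1) = u'^p - u'}
    (h1 : u = u') (h2 : v = v') :
    (some ⟨(u,v),h⟩ : YPt p k) = some ⟨(u',v'),h'⟩ := by
  subst h1; subst h2; rfl

lemma Fmap_mul (A B : Matrix.SpecialLinearGroup (Fin 2) (ZMod p)) (q : YPt p k) :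
    Fmap (A * B) q = Fmap A (Fmap B q) := by
  have e00 : emb p k ((A*B).1 0 0) = emb p k (A.1 0 0) * emb p k (B.1 0 0) + emb p k (A.1 0 1) * emb p k (B.1 1 0) := mulEntry A B 0 0
  have e01 : emb p k ((A*B).1 0 1) = emb p k (A.1 0 0) * emb p k (B.1 0 1) + emb p k (A.1 0 1) * emb p k (B.1 1 1) := mulEntry A B 0 1
  have e10 : emb p k ((A*B).1 1 0) = emb p k (A.1 1 0) * emb p k (B.1 0 0) + emb p k (A.1 1 1) * emb p k (B.1 1 0) := mulEntry A B 1 0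
  have e11 : emb p k ((A*B).1 1 1) = emb p k (A.1 1 0) * emb p k (B.1 0 1) + emb p k (A.1 1 1) * emb p k (B.1 1 1) := mulEntry A B 1 1
  have hdetB : emb p k (B.1 0 0) * emb p k (B.1 1 1) - emb p k (B.1 0 1) * emb p k (B.1 1 0) = 1 := detk B
  obtain _ | ⟨⟨x, y⟩, hv⟩ := q
  · -- q = ∞
    rw [Fmap_none, Fmap_none]
    by_cases hc2 : emb p k (B.1 1 0) = 0
    · -- B fixes ∞
      have ha2 : emb p k (B.1 0 0) ≠ 0 := by
        intro h; rw [h, hc2] at hdetB; simp at hdetB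
      rw [show FmapInf B = (none : YPt p k) from dif_pos hc2, Fmap_none]
      simp only [FmapInf]
      by_cases hc1 : emb p k (A.1 1 0) = 0
      · erw [dif_pos hc1, dif_pos (by rw [e10, hc1, hc2]; ring)]
      · have hAB : emb p k ((A*B).1 1 0) ≠ 0 := by
          rw [e10, hc2]; simpa using mul_ne_zero hc1 ha2
        erw [dif_neg hc1, dif_neg hAB]
        refine some_eq' ?_ rfl
        rw [e00, e10, hc2]
        field_simp
        ring
    · -- B sends ∞ to an affine point
      rw [show FmapInf B = _ from dif_neg hc2, Fmap_some]
      simp only [FmapAff, FmapInf]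
      by_cases hw : emb p k (A.1 1 0) * (emb p k (B.1 0 0) / emb p k (B.1 1 0)) + emb p k (A.1 1 1) = 0
      · erw [dif_pos hw, dif_pos (by rw [e10]; field_simp at hw; linear_combination hw)]
      · have hAB : emb p k ((A*B).1 1 0) ≠ 0 := by
          rw [e10]; intro h; apply hw
          field_simp
          linear_combination h
        erw [dif_neg hw, dif_neg hAB]
        refine some_eq' ?_ (zero_div _).symm
        rw [e00, e10]
        field_simp
  · -- q affine
    rw [Fmap_some]
    have hdetA : emb p k (A.1 0 0) * emb p k (A.1 1 1) - emb p k (A.1 0 1) * emb p k (A.1 1 0) = 1 := detk A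
    by_cases hw2 : emb p k (B.1 1 0) * x + emb p k (B.1 1 1) = 0
    · -- B sends q to ∞
      have hc2 : emb p k (B.1 1 0) ≠ 0 := by
        intro h
        rw [h, zero_mul, zero_add] at hw2
        rw [hw2, h] at hdetB; simp at hdetB
      have hax : emb p k (B.1 0 0) * x + emb p k (B.1 0 1) ≠ 0 := by
        intro h
        have h1 : (1:k) = 0 := by
          linear_combination emb p k (B.1 0 0) * hw2 - emb p k (B.1 1 0) * h - hdetB
        exact one_ne_zero h1
      have hxp : x^p = x := by
        have h2 : (emb p k (B.1 1 0)*x + emb p k (B.1 1 1))^p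
            = emb p k (B.1 1 0)*x^p + emb p k (B.1 1 1) := by
          rw [add_pow_char (emb p k (B.1 1 0)*x) (emb p k (B.1 1 1)) p, mul_pow,
            emb_pow, emb_pow]
        rw [hw2, zero_pow (Fact.out (p := p.Prime)).ne_zero] at h2
        have h3 : emb p k (B.1 1 0) * (x^p - x) = 0 := by linear_combination (-h2) - hw2
        rcases mul_eq_zero.1 h3 with h | h
        · exact absurd h hc2
        · exact sub_eq_zero.1 h
      have hy : y = 0 := by
        have hy1 : y^(p+1) = 0 := by rw [hv, hxp, sub_self]
        exact pow_eq_zero_iff (Nat.succ_ne_zero p) |>.1 hy1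
      rw [show Fmap B (some ⟨(x,y),hv⟩) = (none : YPt p k) from dif_pos hw2, Fmap_none]
      simp only [FmapAff, FmapInf]
      by_cases hc1 : emb p k (A.1 1 0) = 0
      · erw [dif_pos (show emb p k ((A*B).1 1 0) * x + emb p k ((A*B).1 1 1) = 0 by
          rw [e10, e11, hc1]; linear_combination emb p k (A.1 1 1) * hw2), dif_pos hc1]
      · have hABw : emb p k ((A*B).1 1 0) * x + emb p k ((A*B).1 1 1) ≠ 0 := by
          rw [e10, e11]
          intro h
          have h4 : emb p k (A.1 1 0) * (emb p k (B.1 0 0) * x + emb p k (B.1 0 1)) = 0 := by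
            linear_combination h - emb p k (A.1 1 1) * hw2
          rcases mul_eq_zero.1 h4 with h' | h'
          · exact hc1 h'
          · exact hax h'
        erw [dif_neg hABw, dif_neg hc1]
        refine some_eq' ?_ ?_
        · rw [e00, e01, e10, e11]
          have hww : (emb p k (A.1 1 0) * emb p k (B.1 0 0) + emb p k (A.1 1 1) * emb p k (B.1 1 0)) * x
              + (emb p k (A.1 1 0) * emb p k (B.1 0 1) + emb p k (A.1 1 1) * emb p k (B.1 1 1)) ≠ 0 := by
            rw [e10, e11] at hABw; exact hABw
          rw [div_eq_div_iff hww hc1]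
          linear_combination (-(emb p k (B.1 1 0)*x + emb p k (B.1 1 1))) * hdetA - hw2
        · simp [hy]
    · -- B sends q to an affine point
      rw [show Fmap B (some ⟨(x,y),hv⟩) = _ from dif_neg hw2, Fmap_some]
      simp only [FmapAff]
      by_cases hw' : emb p k (A.1 1 0) * ((emb p k (B.1 0 0)*x + emb p k (B.1 0 1))
          / (emb p k (B.1 1 0)*x + emb p k (B.1 1 1))) + emb p k (A.1 1 1) = 0
      · erw [dif_pos (show emb p k ((A*B).1 1 0) * x + emb p k ((A*B).1 1 1) = 0 by
          rw [e10, e11]; rw [mul_div_assoc', div_add' _ _ _ hw2, div_eq_zero_iff] at hw'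
          rcases hw' with h | h
          · linear_combination h
          · exact absurd h hw2), dif_pos hw']
      · have hABw : emb p k ((A*B).1 1 0) * x + emb p k ((A*B).1 1 1) ≠ 0 := by
          rw [e10, e11]
          intro h
          apply hw'
          rw [mul_div_assoc', div_add' _ _ _ hw2, div_eq_zero_iff]; left
          linear_combination h
        erw [dif_neg hABw, dif_neg hw']
        have hww : (emb p k (A.1 1 0) * emb p k (B.1 0 0) + emb p k (A.1 1 1) * emb p k (B.1 1 0)) * x
            + (emb p k (A.1 1 0) * emb p k (B.1 0 1) + emb p k (A.1 1 1) * emb p k (B.1 1 1)) ≠ 0 := by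
          rw [e10, e11] at hABw; exact hABw
        refine some_eq' ?_ ?_
        · rw [e00, e01, e10, e11, div_eq_div_iff hww hw']
          field_simp
          ring
        · rw [e10, e11, div_div, div_eq_div_iff hww (mul_ne_zero hw2 hw')]
          field_simp
          ring

/-- The action as a permutation. -/
noncomputable def Phi (A : Matrix.SpecialLinearGroup (Fin 2) (ZMod p)) :
    Equiv.Perm (YPt p k) where
  toFun := Fmap A
  invFun := Fmap A⁻¹
  left_inv q := by rw [← Fmap_mul, inv_mul_cancel, Fmap_one]
  right_inv q := by rw [← Fmap_mul, mul_inv_cancel, Fmap_one]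

lemma mem_range_of_pow {x : k} (hx : x^p = x) : ∃ t : ZMod p, emb p k t = x := by
  haveI : NeZero p := ⟨(Fact.out (p := p.Prime)).ne_zero⟩
  classical
  by_contra hcon
  push_neg at hcon
  set g : Polynomial k := Polynomial.X^p - Polynomial.X with hg
  have hdeg : g.natDegree = p := by
    rw [hg, Polynomial.natDegree_sub_eq_left_of_natDegree_lt, Polynomial.natDegree_X_pow]
    rw [Polynomial.natDegree_X_pow, Polynomial.natDegree_X]
    exact (Fact.out (p := p.Prime)).one_lt
  have hg0 : g ≠ 0 := by
    intro h
    rw [h, Polynomial.natDegree_zero] at hdeg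
    exact (Fact.out (p := p.Prime)).ne_zero hdeg.symm
  have hroot : ∀ z : k, z^p = z → z ∈ g.roots := by
    intro z hz
    rw [Polynomial.mem_roots hg0]
    simp [hg, Polynomial.IsRoot, sub_eq_zero, hz]
  set S : Finset k := Finset.image (fun t : ZMod p => emb p k t) Finset.univ with hS
  have hScard : S.card = p := by
    rw [hS, Finset.card_image_of_injective _ emb_inj, Finset.card_univ, ZMod.card]
  have hxS : x ∉ S := by
    rw [hS]
    simp only [Finset.mem_image, Finset.mem_univ, true_and]
    rintro ⟨t, ht⟩
    exact hcon t ht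
  have hsub : insert x S ⊆ g.roots.toFinset := by
    intro z hz
    rw [Multiset.mem_toFinset]
    rcases Finset.mem_insert.1 hz with h | h
    · exact h ▸ hroot x hx
    · rw [hS] at h
      simp only [Finset.mem_image, Finset.mem_univ, true_and] at h
      obtain ⟨t, rfl⟩ := h
      exact hroot _ (emb_pow t)
  have h1 : (insert x S).card = p + 1 := by rw [Finset.card_insert_of_notMem hxS, hScard]
  have h2 : (insert x S).card ≤ g.roots.toFinset.card := Finset.card_le_card hsub
  have h3 : g.roots.toFinset.card ≤ Multiset.card g.roots := Multiset.toFinset_card_le _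
  have h4 : Multiset.card g.roots ≤ g.natDegree := Polynomial.card_roots' g
  omega

/-- Only points with `y = 0` (or `∞`) can be fixed by a nontrivial element. -/
lemma fix_y_eq_zero {A : Matrix.SpecialLinearGroup (Fin 2) (ZMod p)} (hA : A ≠ 1)
    {x y : k} {hv : ((x,y) : k × k).2 ^ (p + 1) = (x,y).1 ^ p - (x,y).1}
    (h : Fmap A (some ⟨(x,y),hv⟩) = some ⟨(x,y),hv⟩) : y = 0 := by
  by_contra hy
  rw [Fmap_some] at h
  simp only [FmapAff] at h
  by_cases hw : emb p k (A.1 1 0) * x + emb p k (A.1 1 1) = 0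
  · erw [dif_pos hw] at h
    cases h
  erw [dif_neg hw] at h
  have h2 := congrArg Subtype.val (Option.some.inj h)
  have hx1 : (emb p k (A.1 0 0) * x + emb p k (A.1 0 1))
      / (emb p k (A.1 1 0) * x + emb p k (A.1 1 1)) = x := congrArg Prod.fst h2
  have hy1 : y / (emb p k (A.1 1 0) * x + emb p k (A.1 1 1)) = y := congrArg Prod.snd h2
  have hw1 : emb p k (A.1 1 0) * x + emb p k (A.1 1 1) = 1 := by
    have h3 : y = y * (emb p k (A.1 1 0) * x + emb p k (A.1 1 1)) := (div_eq_iff hw).1 hy1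
    have h4 : y * (emb p k (A.1 1 0) * x + emb p k (A.1 1 1)) = y * 1 := by
      rw [mul_one, ← h3]
    exact mul_left_cancel₀ hy h4
  by_cases hcz : A.1 1 0 = 0
  · have hc0 : emb p k (A.1 1 0) = 0 := by rw [hcz, map_zero]
    have hd1 : A.1 1 1 = 1 := by
      apply emb_inj (k := k)
      rw [map_one]
      rw [hc0, zero_mul, zero_add] at hw1
      exact hw1
    have hdet := A.2
    rw [Matrix.det_fin_two, hcz, hd1] at hdet
    simp only [mul_one, mul_zero, sub_zero] at hdet
    have hb0 : A.1 0 1 = 0 := by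
      apply emb_inj (k := k)
      rw [map_zero]
      have h11 : emb p k (A.1 1 1) = 1 := by rw [hd1, map_one]
      rw [hc0, zero_mul, zero_add, h11, div_one, hdet, map_one, one_mul] at hx1
      linear_combination hx1
    apply hA
    apply Subtype.ext
    rw [Matrix.SpecialLinearGroup.coe_one]
    ext i j
    fin_cases i <;> fin_cases j
    · simpa using hdet
    · simpa using hb0
    · simpa using hcz
    · simpa using hd1
  · have hc0 : emb p k (A.1 1 0) ≠ 0 := fun h' => hcz (emb_inj (by rw [h', map_zero]))
    have hxval : x = (1 - emb p k (A.1 1 1)) / emb p k (A.1 1 0) := by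
      field_simp
      linear_combination hw1
    have hxp : x^p = x := by
      rw [hxval, div_pow, sub_pow_char, one_pow, emb_pow, emb_pow]
    have : y ^ (p+1) = 0 := by rw [hv]; simp only; rw [hxp, sub_self]
    exact hy (pow_eq_zero_iff (Nat.succ_ne_zero p) |>.1 this)

lemma fmap_to_infty {q : YPt p k} (hq : ∃ A, A ≠ 1 ∧ Fmap A q = q) :
    ∃ B, Fmap B q = (none : YPt p k) := by
  obtain ⟨A, hA, hfix⟩ := hq
  obtain _ | ⟨⟨x, y⟩, hv⟩ := q
  · exact ⟨1, Fmap_one none⟩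
  · have hy : y = 0 := fix_y_eq_zero hA hfix
    subst hy
    have hxp : x^p = x := by
      have hv' := hv
      simp only at hv'
      rw [zero_pow (Nat.succ_ne_zero p)] at hv'
      linear_combination -hv'
    obtain ⟨t, ht⟩ := mem_range_of_pow hxp
    refine ⟨⟨!![0, -1; 1, -t], by simp [Matrix.det_fin_two_of]⟩, ?_⟩
    erw [Fmap_some]
    apply dif_pos
    show emb p k ((1 : ZMod p)) * x + emb p k (-t) = 0
    rw [map_one, one_mul, map_neg, ht, add_neg_cancel]

lemma fmap_from_infty {q : YPt p k} (hq : ∃ A, A ≠ 1 ∧ Fmap A q = q) :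
    ∃ B, Fmap B (none : YPt p k) = q := by
  obtain ⟨A, hA, hfix⟩ := hq
  obtain _ | ⟨⟨x, y⟩, hv⟩ := q
  · exact ⟨1, Fmap_one none⟩
  · have hy : y = 0 := fix_y_eq_zero hA hfix
    subst hy
    have hxp : x^p = x := by
      have hv' := hv
      simp only at hv'
      rw [zero_pow (Nat.succ_ne_zero p)] at hv'
      linear_combination -hv'
    obtain ⟨t, ht⟩ := mem_range_of_pow hxp
    refine ⟨⟨!![t, -1; 1, 0], by simp [Matrix.det_fin_two_of]⟩, ?_⟩
    erw [Fmap_none]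
    rw [show FmapInf (k := k) ⟨!![t, -1; 1, 0], by simp [Matrix.det_fin_two_of]⟩
      = _ from dif_neg (show emb p k ((1 : ZMod p)) ≠ 0 by rw [map_one]; exact one_ne_zero)]
    exact some_eq' (by show emb p k t / emb p k (1 : ZMod p) = x; rw [map_one, div_one, ht]) rfl

lemma fix_inf_iff (A : Matrix.SpecialLinearGroup (Fin 2) (ZMod p)) :
    Fmap A (none : YPt p k) = none ↔ A.1 1 0 = 0 := by
  constructor
  · intro h
    by_contra hc
    have hc' : emb p k (A.1 1 0) ≠ 0 := fun h' => hc (emb_inj (by rw [h', map_zero]))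
    rw [Fmap_none] at h
    simp only [FmapInf] at h
    erw [dif_neg hc'] at h
    cases h
  · intro h
    rw [Fmap_none]
    exact dif_pos (by rw [h, map_zero])

def inertiaEquiv :
    {A : Matrix.SpecialLinearGroup (Fin 2) (ZMod p) // A.1 1 0 = 0} ≃ (ZMod p)ˣ × ZMod p where
  toFun := fun ⟨A, hA⟩ =>
    (⟨A.1 0 0, A.1 1 1,
      by have h := A.2; rw [Matrix.det_fin_two, hA, mul_zero, sub_zero] at h; exact h,
      by have h := A.2; rw [Matrix.det_fin_two, hA, mul_zero, sub_zero] at h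
         rw [mul_comm]; exact h⟩, A.1 0 1)
  invFun := fun ub =>
    ⟨⟨!![ub.1.val, ub.2; 0, ub.1.inv], by
      rw [Matrix.det_fin_two_of, mul_zero, sub_zero]
      exact ub.1.val_inv⟩, rfl⟩
  left_inv := fun ⟨A, hA⟩ => by
    apply Subtype.ext
    apply Subtype.ext
    ext i j
    fin_cases i <;> fin_cases j
    · rfl
    · rfl
    · exact hA.symm
    · rfl
  right_inv := fun ub => by
    refine Prod.ext ?_ rfl
    exact Units.ext rfl

lemma card_inertia :
    Nat.card {A : Matrix.SpecialLinearGroup (Fin 2) (ZMod p) //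
      Fmap A (none : YPt p k) = none} = p * (p - 1) := by
  haveI : NeZero p := ⟨(Fact.out (p := p.Prime)).ne_zero⟩
  have e1 : {A : Matrix.SpecialLinearGroup (Fin 2) (ZMod p) //
      Fmap A (none : YPt p k) = none} ≃ {A : Matrix.SpecialLinearGroup (Fin 2) (ZMod p) //
      A.1 1 0 = 0} := Equiv.subtypeEquivRight (fun A => fix_inf_iff A)
  rw [Nat.card_congr (e1.trans inertiaEquiv), Nat.card_prod, Nat.card_eq_fintype_card,
    Nat.card_eq_fintype_card, ZMod.card_units_eq_totient, ZMod.card,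
    Nat.totient_prime (Fact.out (p := p.Prime)), mul_comm]

end Aux


/-- For the curve `Y : y^{p+1} = x^p - x` with its `SL₂(𝔽_p)`-action
`A·(x,y) = ((ax+b)/(cx+d), y/(cx+d))` (points with `cx+d = 0` are sent to `∞`,
and `∞` is sent to `(a/c, 0)` when `c ≠ 0`), the quotient map `Y → Y/SL₂(𝔽_p)`
is branched at exactly one point (the ramification points form one nonempty
orbit), and the inertia group of the point `∞` above the branch point has
order `p(p-1)`. -/
theorem stmt8 (p : ℕ) (hp : p.Prime) (h5 : 5 ≤ p)
    (k : Type*) [Field k] [IsAlgClosed k] [CharP k p] :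
    ∃ φ : Matrix.SpecialLinearGroup (Fin 2) (ZMod p) → Equiv.Perm (YPt p k),
      φ 1 = Equiv.refl _ ∧
      (∀ A B, φ (A * B) = (φ B).trans (φ A)) ∧
      -- action on affine points where `cx + d ≠ 0`
      (∀ A : Matrix.SpecialLinearGroup (Fin 2) (ZMod p),
        ∀ (x y : k) (hv : y ^ (p + 1) = x ^ p - x),
        ((ZMod.cast (A.1 1 0) : k) * x + (ZMod.cast (A.1 1 1) : k) ≠ 0 →
          ∃ (x' y' : k) (hv' : y' ^ (p + 1) = x' ^ p - x'),
            φ A (some ⟨(x, y), hv⟩) = some ⟨(x', y'), hv'⟩ ∧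
            x' * ((ZMod.cast (A.1 1 0) : k) * x + (ZMod.cast (A.1 1 1) : k))
              = (ZMod.cast (A.1 0 0) : k) * x + (ZMod.cast (A.1 0 1) : k) ∧
            y' * ((ZMod.cast (A.1 1 0) : k) * x + (ZMod.cast (A.1 1 1) : k)) = y) ∧
        ((ZMod.cast (A.1 1 0) : k) * x + (ZMod.cast (A.1 1 1) : k) = 0 →
          φ A (some ⟨(x, y), hv⟩) = none)) ∧
      -- action on the point at infinity
      (∀ A : Matrix.SpecialLinearGroup (Fin 2) (ZMod p),
        ((ZMod.cast (A.1 1 0) : k) = 0 → φ A none = none) ∧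
        ((ZMod.cast (A.1 1 0) : k) ≠ 0 →
          ∃ hv' : (0 : k) ^ (p + 1) =
              ((ZMod.cast (A.1 0 0) : k) / (ZMod.cast (A.1 1 0) : k)) ^ p
                - (ZMod.cast (A.1 0 0) : k) / (ZMod.cast (A.1 1 0) : k),
            φ A none = some ⟨((ZMod.cast (A.1 0 0) : k) / (ZMod.cast (A.1 1 0) : k),
              0), hv'⟩)) ∧
      -- there is ramification, and all ramification points lie in a single orbit,
      -- i.e. the quotient map is branched at exactly one point
      (∃ q : YPt p k, ∃ A, A ≠ 1 ∧ φ A q = q) ∧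
      (∀ q q' : YPt p k, (∃ A, A ≠ 1 ∧ φ A q = q) → (∃ A, A ≠ 1 ∧ φ A q' = q') →
        ∃ A, φ A q = q') ∧
      -- the inertia group of the point `∞` has order `p(p-1)`
      Nat.card {A : Matrix.SpecialLinearGroup (Fin 2) (ZMod p) //
        φ A (none : YPt p k) = none} = p * (p - 1) := by
  
  haveI : Fact p.Prime := ⟨hp⟩
  refine ⟨Phi, Equiv.ext fun q => Fmap_one q, fun A B => Equiv.ext fun q => Fmap_mul A B q,
    ?_, ?_, ?_, ?_, card_inertia⟩
  · -- affine action
    intro A x y hv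
    constructor
    · intro hw
      have hw' : emb p k (A.1 1 0) * x + emb p k (A.1 1 1) ≠ 0 := hw
      refine ⟨(emb p k (A.1 0 0) * x + emb p k (A.1 0 1))
          / (emb p k (A.1 1 0) * x + emb p k (A.1 1 1)),
        y / (emb p k (A.1 1 0) * x + emb p k (A.1 1 1)),
        curveKey (detk A) (emb_pow _) (emb_pow _) (emb_pow _) (emb_pow _) hv hw',
        ?_, div_mul_cancel₀ _ hw', div_mul_cancel₀ _ hw'⟩
      show Fmap A (some ⟨(x, y), hv⟩) = _
      rw [Fmap_some]
      exact dif_neg hw'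
    · intro hw
      have hw' : emb p k (A.1 1 0) * x + emb p k (A.1 1 1) = 0 := hw
      show Fmap A (some ⟨(x, y), hv⟩) = none
      rw [Fmap_some]
      exact dif_pos hw'
  · -- action at infinity
    intro A
    constructor
    · intro hc
      show Fmap A (none : YPt p k) = none
      rw [Fmap_none]
      exact dif_pos hc
    · intro hc
      have hc' : emb p k (A.1 1 0) ≠ 0 := hc
      refine ⟨by rw [zero_pow (Nat.succ_ne_zero p)]
                 show (0:k) = (emb p k (A.1 0 0) / emb p k (A.1 1 0)) ^ p
                   - emb p k (A.1 0 0) / emb p k (A.1 1 0)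
                 rw [div_pow, emb_pow, emb_pow, sub_self], ?_⟩
      show Fmap A (none : YPt p k) = _
      rw [Fmap_none]
      exact dif_neg hc'
  · -- ramification exists
    refine ⟨none, ⟨!![1, 1; 0, 1], by simp [Matrix.det_fin_two_of]⟩, ?_, ?_⟩
    · intro h
      have h2 := congrArg (fun M => M.1 0 1) h
      simp only [Matrix.SpecialLinearGroup.coe_one] at h2
      have h3 : (1 : ZMod p) = 0 := by
        have : (!![1, 1; 0, 1] : Matrix (Fin 2) (Fin 2) (ZMod p)) 0 1 = 1 := rfl
        rw [this] at h2
        rw [h2, Matrix.one_apply_ne (by decide)]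
      exact one_ne_zero h3
    · show Fmap _ (none : YPt p k) = none
      erw [Fmap_none]
      exact dif_pos (by show emb p k (0 : ZMod p) = 0; rw [map_zero])
  · -- single orbit
    intro q q' hq hq'
    obtain ⟨B, hB⟩ := fmap_to_infty hq
    obtain ⟨B', hB'⟩ := fmap_from_infty hq'
    exact ⟨B' * B, by show Fmap (B' * B) q = q'; rw [Fmap_mul, hB, hB']⟩
end

section
/- Let p ≥ 5 be prime. If a subgroup N of SL₂(𝔽_p) contains an element of order p and an element of order m > 2 with m dividing p+1, then N = SL₂(𝔽_p). -/
open Matrix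

namespace Dickson11

variable {p : ℕ} [Fact p.Prime]

local notation "SL2" => Matrix.SpecialLinearGroup (Fin 2) (ZMod p)
local notation "M2" => Matrix (Fin 2) (Fin 2) (ZMod p)

/-- upper unipotent -/
def u (s : ZMod p) : SL2 := ⟨!![1, s; 0, 1], by simp [Matrix.det_fin_two_of]⟩

/-- lower unipotent -/
def l (s : ZMod p) : SL2 := ⟨!![1, 0; s, 1], by simp [Matrix.det_fin_two_of]⟩

@[simp] lemma u_coe (s : ZMod p) : (u s : M2) = !![1, s; 0, 1] := rfl
@[simp] lemma l_coe (s : ZMod p) : (l s : M2) = !![1, 0; s, 1] := rfl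

@[simp] lemma u_zero : (u 0 : SL2) = 1 := by
  apply Subtype.ext; simp [u, Matrix.one_fin_two]

@[simp] lemma l_zero : (l 0 : SL2) = 1 := by
  apply Subtype.ext; simp [l, Matrix.one_fin_two]

lemma u_mul (s t : ZMod p) : u s * u t = u (s + t) := by
  apply Subtype.ext
  simp [Matrix.SpecialLinearGroup.coe_mul, Matrix.mul_fin_two, add_comm]

lemma l_mul (s t : ZMod p) : l s * l t = l (s + t) := by
  apply Subtype.ext
  simp [Matrix.SpecialLinearGroup.coe_mul, Matrix.mul_fin_two, add_comm]

lemma u_pow (s : ZMod p) (n : ℕ) : u s ^ n = u ((n : ZMod p) * s) := by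
  induction n with
  | zero => apply Subtype.ext; simp [Matrix.one_fin_two]
  | succ k ih => rw [pow_succ, ih, u_mul]; push_cast; ring_nf

lemma l_pow (s : ZMod p) (n : ℕ) : l s ^ n = l ((n : ZMod p) * s) := by
  induction n with
  | zero => apply Subtype.ext; simp [Matrix.one_fin_two]
  | succ k ih => rw [pow_succ, ih, l_mul]; push_cast; ring_nf

/-- from one nontrivial unipotent we get all of them -/
lemma u_mem_of_u_mem {N : Subgroup SL2} {s : ZMod p} (hs : s ≠ 0) (h : u s ∈ N)
    (t : ZMod p) : u t ∈ N := by
  have : u s ^ (t * s⁻¹).val = u t := by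
    rw [u_pow, ZMod.natCast_val, ZMod.cast_id]
    congr 1
    field_simp
  exact this ▸ pow_mem h _

lemma l_mem_of_l_mem {N : Subgroup SL2} {s : ZMod p} (hs : s ≠ 0) (h : l s ∈ N)
    (t : ZMod p) : l t ∈ N := by
  have : l s ^ (t * s⁻¹).val = l t := by
    rw [l_pow, ZMod.natCast_val, ZMod.cast_id]
    congr 1
    field_simp
  exact this ▸ pow_mem h _

lemma tri_pow (x : SL2) (hx : (x : M2) 1 0 = 0) (k : ℕ) :
    ((x : M2) ^ k) 1 0 = 0 ∧
    ((x : M2) ^ k) 0 0 = ((x : M2) 0 0) ^ k ∧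
    ((x : M2) ^ k) 1 1 = ((x : M2) 1 1) ^ k := by
  induction k with
  | zero => simp [Matrix.one_fin_two]
  | succ k ih =>
    obtain ⟨h1, h2, h3⟩ := ih
    refine ⟨?_, ?_, ?_⟩ <;>
      simp [pow_succ, Matrix.mul_apply, Fin.sum_univ_two, h1, h2, h3, hx]

lemma order_dvd_of_lowerleft_zero (x : SL2) (hx : (x : M2) 1 0 = 0) :
    orderOf x ∣ (p - 1) * p := by
  have hdet : (x : M2) 0 0 * (x : M2) 1 1 = 1 := by
    have h2 := x.prop
    rw [Matrix.det_fin_two, hx] at h2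
    simpa using h2
  have ha : (x : M2) 0 0 ≠ 0 := fun h => by simp [h] at hdet
  have hd : (x : M2) 1 1 ≠ 0 := fun h => by simp [h] at hdet
  obtain ⟨h1, h2, h3⟩ := tri_pow x hx (p - 1)
  have heta : ((x : M2) ^ (p-1)) = !![1, ((x : M2) ^ (p-1)) 0 1; 0, 1] := by
    conv_lhs => rw [Matrix.eta_fin_two ((x : M2) ^ (p-1))]
    rw [h1, h2, h3, ZMod.pow_card_sub_one_eq_one ha, ZMod.pow_card_sub_one_eq_one hd]
  have key : x ^ (p - 1) = u (((x : M2) ^ (p-1)) 0 1) := by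
    apply Subtype.ext
    rw [Matrix.SpecialLinearGroup.coe_pow]
    exact heta
  apply orderOf_dvd_of_pow_eq_one
  rw [pow_mul, key, u_pow]
  simp

/-- generation: all upper unipotents plus one element with nonzero lower-left entry
generate everything -/
lemma gen_top (N : Subgroup SL2) (hU : ∀ s, u s ∈ N)
    (h : SL2) (hhN : h ∈ N) (hc : (h : M2) 1 0 ≠ 0) : N = ⊤ := by
  set c0 : ZMod p := (h : M2) 1 0 with hc0
  have hdeth : (h : M2) 0 0 * (h : M2) 1 1 - (h : M2) 0 1 * (h : M2) 1 0 = 1 := by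
    have := h.prop; rwa [Matrix.det_fin_two] at this
  -- l c0 ∈ N
  have hlc : l c0 ∈ N := by
    have key : u ((1 - (h : M2) 0 0) * c0⁻¹) * h *
        u (-((h : M2) 0 1 + (1 - (h : M2) 0 0) * c0⁻¹ * (h : M2) 1 1)) = l c0 := by
      apply Subtype.ext
      simp only [Matrix.SpecialLinearGroup.coe_mul, u_coe, l_coe]
      rw [Matrix.eta_fin_two (h : M2)]
      simp only [Matrix.mul_fin_two]
      ext i j
      fin_cases i <;> fin_cases j <;>
        · simp only [Matrix.cons_val', Matrix.cons_val_zero, Matrix.cons_val_one,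
            Matrix.head_cons, Matrix.head_fin_const, Matrix.empty_val',
            Matrix.cons_val_fin_one, Fin.zero_eta, Fin.mk_one, Matrix.of_apply]
          field_simp
          try ring_nf
          try (rw [hc0] <;> first | ring1 | linear_combination (h : M2) 1 0 * hdeth)
    exact key ▸ mul_mem (mul_mem (hU _) hhN) (hU _)
  have hL : ∀ s, l s ∈ N := l_mem_of_l_mem hc hlc
  have claim : ∀ z : SL2, (z : M2) 1 0 ≠ 0 → z ∈ N := by
    intro z hz
    have hdetz : (z : M2) 0 0 * (z : M2) 1 1 - (z : M2) 0 1 * (z : M2) 1 0 = 1 := by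
      have := z.prop; rwa [Matrix.det_fin_two] at this
    have key : u (((z : M2) 0 0 - 1) * ((z : M2) 1 0)⁻¹) * l ((z : M2) 1 0) *
        u (((z : M2) 1 1 - 1) * ((z : M2) 1 0)⁻¹) = z := by
      apply Subtype.ext
      simp only [Matrix.SpecialLinearGroup.coe_mul, u_coe, l_coe]
      conv_rhs => rw [Matrix.eta_fin_two (z : M2)]
      simp only [Matrix.mul_fin_two]
      ext i j
      fin_cases i <;> fin_cases j <;>
        · simp only [Matrix.cons_val', Matrix.cons_val_zero, Matrix.cons_val_one,
            Matrix.head_cons, Matrix.head_fin_const, Matrix.empty_val',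
            Matrix.cons_val_fin_one, Fin.zero_eta, Fin.mk_one, Matrix.of_apply]
          field_simp
          try ring_nf
          try (first
            | linear_combination hdetz
            | linear_combination -hdetz
            | linear_combination (z : M2) 1 0 * hdetz
            | linear_combination -((z : M2) 1 0) * hdetz)
    exact key ▸ mul_mem (mul_mem (hU _) (hL _)) (hU _)
  ext z
  simp only [Subgroup.mem_top, iff_true]
  by_cases hz : (z : M2) 1 0 = 0
  · have hdetz : (z : M2) 0 0 * (z : M2) 1 1 = 1 := by
      have := z.prop; rw [Matrix.det_fin_two, hz] at this; simpa using this
    have h11 : (z : M2) 1 1 ≠ 0 := fun h => by simp [h] at hdetz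
    have h1 : ((z * l 1 : SL2) : M2) 1 0 ≠ 0 := by
      rw [Matrix.SpecialLinearGroup.coe_mul, l_coe]
      rw [Matrix.eta_fin_two (z : M2), Matrix.mul_fin_two]
      simpa [hz] using h11
    have hmem : z * l 1 ∈ N := claim _ h1
    have hzz : z = (z * l 1) * l (-1) := by
      rw [mul_assoc, l_mul]; simp
    rw [hzz]
    exact mul_mem hmem (hL _)
  · exact claim z hz

def w : SL2 := ⟨!![0, -1; 1, 0], by simp [Matrix.det_fin_two_of]⟩

@[simp] lemma w_coe : (((w : SL2)) : M2) = !![0, -1; 1, 0] := rfl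

lemma exists_conj_unipotent (g : SL2) (hg : orderOf g = p) :
    ∃ (C : SL2) (s : ZMod p), s ≠ 0 ∧ C * g = u s * C := by
  have hp2 : 2 ≤ p := (Fact.out : p.Prime).two_le
  have hgp : g ^ p = 1 := by
    have h1 := pow_orderOf_eq_one g
    rwa [hg] at h1
  have hApow : (g : M2) ^ p = 1 := by
    rw [← Matrix.SpecialLinearGroup.coe_pow, hgp, Matrix.SpecialLinearGroup.coe_one]
  have hN0p : ((g : M2) - 1) ^ p = 0 := by
    rw [sub_pow_char_of_commute p (Commute.one_right (g : M2)), hApow, one_pow, sub_self]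
  have hgne : g ≠ 1 := by
    intro h1
    rw [h1, orderOf_one] at hg
    omega
  have hN0ne : (g : M2) - 1 ≠ 0 := by
    intro h0
    rw [sub_eq_zero] at h0
    exact hgne (Subtype.ext (by rw [h0, Matrix.SpecialLinearGroup.coe_one]))
  have hdet0 : ((g : M2) 0 0 - 1) * ((g : M2) 1 1 - 1) - (g : M2) 0 1 * (g : M2) 1 0 = 0 := by
    have hd : Matrix.det ((g : M2) - 1) = 0 := by
      have : Matrix.det ((g : M2) - 1) ^ p = 0 := by
        rw [← Matrix.det_pow, hN0p, Matrix.det_zero]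
      exact pow_eq_zero_iff (by omega) |>.mp this
    rw [Matrix.det_fin_two] at hd
    simpa [Matrix.sub_apply, Matrix.one_apply] using hd
  set t : ZMod p := ((g : M2) 0 0 - 1) + ((g : M2) 1 1 - 1) with ht_def
  have hsq : ((g : M2) - 1) * ((g : M2) - 1) = t • ((g : M2) - 1) := by
    ext i j
    fin_cases i <;> fin_cases j <;>
      · simp only [Matrix.mul_apply, Fin.sum_univ_two, Matrix.smul_apply, smul_eq_mul,
          Matrix.sub_apply, Matrix.one_apply, ht_def]
        simp
        try ring
        try linear_combination hdet0
        try linear_combination -hdet0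
  have hpowk : ∀ k : ℕ, ((g : M2) - 1) ^ (k + 1) = t ^ k • ((g : M2) - 1) := by
    intro k
    induction k with
    | zero => simp
    | succ k ih =>
      rw [pow_succ, ih, Matrix.smul_mul, hsq, smul_smul, ← pow_succ]
  have ht0 : t = 0 := by
    have hp1 : p = (p - 1) + 1 := by omega
    have h0 : t ^ (p - 1) • ((g : M2) - 1) = 0 := by
      rw [← hpowk, ← hp1, hN0p]
    obtain ⟨i, j, hij⟩ : ∃ i j, ((g : M2) - 1) i j ≠ 0 := by
      by_contra hcon
      push_neg at hcon
      exact hN0ne (Matrix.ext hcon)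
    have : t ^ (p - 1) * ((g : M2) - 1) i j = 0 := by
      have := congrArg (fun m => m i j) h0
      simpa using this
    have hpw : t ^ (p - 1) = 0 := by
      rcases mul_eq_zero.mp this with h | h
      · exact h
      · exact absurd h hij
    exact pow_eq_zero_iff (by omega) |>.mp hpw
  have htr : (g : M2) 0 0 + (g : M2) 1 1 = 2 := by
    have := ht0
    rw [ht_def] at this
    linear_combination this
  have hdetA : (g : M2) 0 0 * (g : M2) 1 1 - (g : M2) 0 1 * (g : M2) 1 0 = 1 := by
    have := g.prop; rwa [Matrix.det_fin_two] at this
  by_cases hb : (g : M2) 0 1 ≠ 0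
  · refine ⟨l (((g : M2) 0 0 - 1) * ((g : M2) 0 1)⁻¹), (g : M2) 0 1, hb, ?_⟩
    apply Subtype.ext
    simp only [Matrix.SpecialLinearGroup.coe_mul, u_coe, l_coe]
    rw [Matrix.eta_fin_two (g : M2)]
    simp only [Matrix.mul_fin_two]
    ext i j
    fin_cases i <;> fin_cases j <;>
      · simp only [Matrix.cons_val', Matrix.cons_val_zero, Matrix.cons_val_one,
          Matrix.head_cons, Matrix.head_fin_const, Matrix.empty_val',
          Matrix.cons_val_fin_one, Fin.zero_eta, Fin.mk_one, Matrix.of_apply]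
        field_simp
        try ring_nf
        try (first
          | linear_combination hdetA
          | linear_combination -hdetA
          | linear_combination hdetA + (g : M2) 0 0 * htr
          | linear_combination -hdetA + (g : M2) 0 0 * htr
          | linear_combination hdetA - (g : M2) 0 0 * htr
          | linear_combination -hdetA - (g : M2) 0 0 * htr
          | linear_combination htr
          | linear_combination -htr
          | linear_combination (g : M2) 0 1 * htr
          | linear_combination -((g : M2) 0 1) * htr)
  · push_neg at hb
    -- b = 0 forces a = d = 1
    have ha1 : (g : M2) 0 0 = 1 := by
      have h2 : ((g : M2) 0 0 - 1) ^ 2 = 0 := by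
        linear_combination -hdet0 - ((g : M2) 1 0) * hb + ((g : M2) 0 0 - 1) * htr
      have := pow_eq_zero_iff (n := 2) (by omega) |>.mp h2
      linear_combination this
    have hd1 : (g : M2) 1 1 = 1 := by linear_combination htr - ha1
    have hcne : (g : M2) 1 0 ≠ 0 := by
      intro hc0
      apply hN0ne
      ext i j
      fin_cases i <;> fin_cases j <;>
        simp [Matrix.sub_apply, Matrix.one_apply, ha1, hd1, hb, hc0]
    refine ⟨w, -((g : M2) 1 0), neg_ne_zero.mpr hcne, ?_⟩
    apply Subtype.ext
    simp only [Matrix.SpecialLinearGroup.coe_mul, u_coe, w_coe]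
    rw [Matrix.eta_fin_two (g : M2)]
    simp only [Matrix.mul_fin_two]
    ext i j
    fin_cases i <;> fin_cases j <;>
      · simp only [Matrix.cons_val', Matrix.cons_val_zero, Matrix.cons_val_one,
          Matrix.head_cons, Matrix.head_fin_const, Matrix.empty_val',
          Matrix.cons_val_fin_one, Fin.zero_eta, Fin.mk_one, Matrix.of_apply]
        simp [ha1, hd1, hb]
        try ring

end Dickson11

open Dickson11 in
/-- Dickson: for `p ≥ 5`, a subgroup of `SL₂(𝔽_p)` containing an element of order
`p` and an element of order `m > 2` with `m ∣ p + 1` is all of `SL₂(𝔽_p)`. -/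
theorem stmt11 (p : ℕ) (hp : p.Prime) (h5 : 5 ≤ p)
    (N : Subgroup (Matrix.SpecialLinearGroup (Fin 2) (ZMod p)))
    (hord_p : ∃ g ∈ N, orderOf g = p)
    (m : ℕ) (hm : 2 < m) (hmd : m ∣ p + 1)
    (hord_m : ∃ h ∈ N, orderOf h = m) :
    N = ⊤ := by
  haveI : Fact p.Prime := ⟨hp⟩
  obtain ⟨g, hgN, hgord⟩ := hord_p
  obtain ⟨h, hhN, hhord⟩ := hord_m
  obtain ⟨C, s, hs, hCg⟩ := exists_conj_unipotent g hgord
  set f := (MulAut.conj C).toMonoidHom with hf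
  set K := N.map f with hK
  have husK : u s ∈ K := by
    refine Subgroup.mem_map.mpr ⟨g, hgN, ?_⟩
    show C * g * C⁻¹ = u s
    rw [hCg]
    group
  have hU : ∀ t, u t ∈ K := u_mem_of_u_mem hs husK
  have hh'K : f h ∈ K := Subgroup.mem_map_of_mem f hhN
  have hordh' : orderOf (f h) = m := by
    rw [orderOf_injective f (MulEquiv.injective (MulAut.conj C)) h, hhord]
  have hz' : ((f h : Matrix.SpecialLinearGroup (Fin 2) (ZMod p)) :
      Matrix (Fin 2) (Fin 2) (ZMod p)) 1 0 ≠ 0 := by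
    intro hz
    have h1 : m ∣ (p - 1) * p := hordh' ▸ order_dvd_of_lowerleft_zero (f h) hz
    have hpm : ¬ p ∣ m := by
      intro hdvd
      have h2 : p ∣ p + 1 := hdvd.trans hmd
      have h3 : p ∣ 1 := by
        have := Nat.dvd_sub h2 (dvd_refl p)
        simpa using this
      have := Nat.le_of_dvd one_pos h3
      omega
    have hcop : Nat.Coprime m p := (hp.coprime_iff_not_dvd.mpr hpm).symm
    have h4 : m ∣ p - 1 := hcop.dvd_of_dvd_mul_right h1
    have h5' : m ∣ 2 := by
      have := Nat.dvd_sub hmd h4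
      simpa [show p + 1 - (p - 1) = 2 by omega] using this
    have := Nat.le_of_dvd (by norm_num) h5'
    omega
  have hKtop : K = ⊤ := gen_top K hU (f h) hh'K hz'
  have hN : N = Subgroup.comap f K := by
    rw [hK, Subgroup.comap_map_eq_self_of_injective (MulEquiv.injective (MulAut.conj C))]
  rw [hN, hKtop, Subgroup.comap_top]
end

section
/- Let p be an odd prime and k of characteristic p. The polynomial u(x) = 1728^α Σ_{n=0}^{α} C(a₁+α, α-n)·C(α, n)·(x/1728)ⁿ ∈ k[x], where a₁ = ⌈(p-1)/3⌉, a₂ = 2⌈(p-1)/4⌉ and α = (p-1-a₁-a₂)/2, is a solution of the differential equation x(x-1728)u'' + [(2+a₁+a₂)x - 1728(1+a₁)]u' + ((1+a₁+a₂)²/4)u = 0 over k. -/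
open Polynomial

private lemma coeffL1 {k : Type*} [CommRing k] (q : k[X]) (m : ℕ) :
    (X * derivative q).coeff m = (m : k) * q.coeff m := by
  cases m with
  | zero => simp [Polynomial.mul_coeff_zero]
  | succ n =>
    rw [Polynomial.coeff_X_mul, Polynomial.coeff_derivative]
    push_cast; ring

private lemma coeffL2 {k : Type*} [CommRing k] (q : k[X]) (m : ℕ) :
    (X * (X * derivative (derivative q))).coeff m
      = (m : k) * ((m : k) - 1) * q.coeff m := by
  cases m with
  | zero => simp [Polynomial.mul_coeff_zero]
  | succ n =>
    rw [Polynomial.coeff_X_mul, coeffL1, Polynomial.coeff_derivative]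
    push_cast; ring

/-- The polynomial `u(x) = 1728^α Σ_n C(a₁+α, α-n) C(α, n) (x/1728)ⁿ`, with
`a₁ = ⌈(p-1)/3⌉`, `a₂ = 2⌈(p-1)/4⌉` and `α = (p-1-a₁-a₂)/2`, satisfies the
differential equation
`x(x-1728)u'' + [(2+a₁+a₂)x - 1728(1+a₁)]u' + ((1+a₁+a₂)²/4)u = 0`
in characteristic `p`. -/
theorem stmt14 (p : ℕ) (hp : p.Prime) (h5 : 5 ≤ p)
    (k : Type*) [Field k] [CharP k p]
    (a₁ a₂ α : ℕ)
    (ha₁ : (a₁ : ℚ) = (⌈((p : ℚ) - 1) / 3⌉ : ℤ))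
    (ha₂ : (a₂ : ℚ) = 2 * (⌈((p : ℚ) - 1) / 4⌉ : ℤ))
    (hα : 2 * α + a₁ + a₂ = p - 1)
    (u : k[X])
    (hu : u = C ((1728 : k) ^ α) * ∑ n ∈ Finset.range (α + 1),
        C ((Nat.choose (a₁ + α) (α - n) : k) * (Nat.choose α n : k))
          * (C ((1728 : k)⁻¹) * X) ^ n) :
    X * (X - C (1728 : k)) * derivative (derivative u)
      + (C ((2 : k) + (a₁ : k) + (a₂ : k)) * X
          - C ((1728 : k) * (1 + (a₁ : k)))) * derivative u
      + C ((4 : k)⁻¹ * ((1 : k) + (a₁ : k) + (a₂ : k)) ^ 2) * u = 0 := by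
  have h2 : (2:k) ≠ 0 := by
    intro h0
    have hd : p ∣ 2 := (CharP.cast_eq_zero_iff k p 2).mp (by exact_mod_cast h0)
    have := Nat.le_of_dvd (by norm_num) hd
    omega
  have h3 : (3:k) ≠ 0 := by
    intro h0
    have hd : p ∣ 3 := (CharP.cast_eq_zero_iff k p 3).mp (by exact_mod_cast h0)
    have := Nat.le_of_dvd (by norm_num) hd
    omega
  have h1728 : (1728:k) ≠ 0 := by
    have e : (1728:k) = 2^6 * 3^3 := by norm_num
    rw [e]
    exact mul_ne_zero (pow_ne_zero _ h2) (pow_ne_zero _ h3)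
  have h4 : (4:k) ≠ 0 := by
    have e : (4:k) = 2^2 := by norm_num
    rw [e]; exact pow_ne_zero _ h2
  have h4inv : (4:k)⁻¹ * 4 = 1 := inv_mul_cancel₀ h4
  have hS : (a₁ : k) + a₂ + 1 + 2*α = 0 := by
    have h1 : ((2*α + a₁ + a₂ + 1 : ℕ) : k) = 0 := by
      have e : 2*α + a₁ + a₂ + 1 = p := by
        have := hp.two_le; omega
      rw [e]; exact CharP.cast_eq_zero k p
    push_cast at h1
    linear_combination h1
  have hcoeff : ∀ n : ℕ, u.coeff n =
      (1728:k)^α * (((a₁+α).choose (α-n) : k) * ((α.choose n : k))) * (1728:k)⁻¹^n := by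
    intro n
    rw [hu, Polynomial.coeff_C_mul, Polynomial.finset_sum_coeff,
        Finset.sum_eq_single n]
    · simp only [mul_pow, ← Polynomial.C_pow, Polynomial.coeff_C_mul,
        Polynomial.coeff_X_pow, eq_self_iff_true, if_true]
      ring
    · intro j _ hjn
      simp only [mul_pow, ← Polynomial.C_pow, Polynomial.coeff_C_mul,
        Polynomial.coeff_X_pow, if_neg (Ne.symm hjn), mul_zero]
    · intro hn
      have hlt : α < n := by
        by_contra hc
        exact hn (Finset.mem_range.mpr (by omega))
      simp [Nat.choose_eq_zero_of_lt hlt]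
  have hrec : ∀ m : ℕ, ((m:k) - α)^2 * u.coeff m
      = 1728 * ((m:k)+1) * ((m:k) + a₁ + 1) * u.coeff (m+1) := by
    intro m
    rcases lt_trichotomy m α with h | h | h
    · rw [hcoeff, hcoeff]
      have hi : (1728:k)⁻¹ ^ m = 1728 * (1728:k)⁻¹^(m+1) := by
        rw [pow_succ, ← mul_assoc, mul_comm (1728:k) ((1728:k)⁻¹^m), mul_assoc,
          mul_inv_cancel₀ h1728, mul_one]
      have e1 := Nat.choose_succ_right_eq α m
      have e2 := Nat.choose_succ_right_eq (a₁+α) (α - m - 1)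
      have hx1 : α - m - 1 + 1 = α - m := by omega
      have hx2 : a₁ + α - (α - m - 1) = a₁ + m + 1 := by omega
      rw [hx1, hx2] at e2
      have hsub : α - (m+1) = α - m - 1 := by omega
      have ek1 : ((α.choose (m+1) : k)) * ((m:k)+1) = (α.choose m : k) * ((α:k) - m) := by
        have hc := congrArg (Nat.cast : ℕ → k) e1
        push_cast [Nat.cast_sub h.le] at hc
        linear_combination hc
      have ek2 : (((a₁+α).choose (α-m) : k)) * ((α:k) - m)
          = ((a₁+α).choose (α-(m+1)) : k) * ((a₁:k) + m + 1) := by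
        rw [hsub]
        have hc := congrArg (Nat.cast : ℕ → k) e2
        push_cast [Nat.cast_sub h.le] at hc
        linear_combination hc
      rw [hi]
      linear_combination (1728 * (1728:k)^α * (1728:k)⁻¹^(m+1)) *
        ( (-(((α:k) - m) * (((a₁+α).choose (α-m) : k)))) * ek1
          + (((m:k)+1) * ((α.choose (m+1) : k))) * ek2 )
    · subst h
      have hz : u.coeff (m+1) = 0 := by
        rw [hcoeff]
        simp [Nat.choose_eq_zero_of_lt (Nat.lt_succ_self m)]
      rw [hz]
      simp
    · have hm : u.coeff m = 0 := by
        rw [hcoeff]; simp [Nat.choose_eq_zero_of_lt h]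
      have hm1 : u.coeff (m+1) = 0 := by
        rw [hcoeff]; simp [Nat.choose_eq_zero_of_lt (by omega : α < m+1)]
      rw [hm, hm1]; ring
  have hexp : X * (X - C (1728:k)) * derivative (derivative u)
      + (C ((2:k) + (a₁:k) + (a₂:k)) * X - C ((1728:k)*(1+(a₁:k)))) * derivative u
      + C ((4:k)⁻¹ * ((1:k)+(a₁:k)+(a₂:k))^2) * u
      = X * (X * derivative (derivative u))
        - C (1728:k) * (X * derivative (derivative u))
        + C ((2:k)+(a₁:k)+(a₂:k)) * (X * derivative u)
        - C ((1728:k)*(1+(a₁:k))) * derivative u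
        + C ((4:k)⁻¹*((1:k)+(a₁:k)+(a₂:k))^2) * u := by ring
  rw [hexp]
  ext m
  simp only [Polynomial.coeff_add, Polynomial.coeff_sub, Polynomial.coeff_C_mul,
    coeffL2, coeffL1, Polynomial.coeff_derivative, Polynomial.coeff_zero]
  linear_combination hrec m
    + (u.coeff m * ((m:k) + (4:k)⁻¹*((1:k)+(a₁:k)+(a₂:k)) - 2*(4:k)⁻¹*(α:k))) * hS
    + (u.coeff m * (α:k)^2) * h4inv
end
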